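/- arXiv:math/0608690 — 4 statements merged into one kernel-verified Lean document; each statement's English description precedes it below -/
import Mathlib

section
/- Let Z be an irreducible, symmetric, mean-zero random walk on ℤ with finite second moment. There exists a constant γ > 0 such that for all integers 0 ≤ x ≤ k, the probability that the walk started at x hits k before hitting 0 satisfies P^x(τ_k < τ_0) ≤ γ x / k. -/
/-!
Let `φ(θ) = ∑ p(z) cos zθ` and let `a(y) = ∫_{-π}^{π} (1 - cos yθ) / (1 - φ(θ)) dθ` be the potential
kernel of the walk (up to the factor `2π`). Irreducibility and the finite second moment give
`c θ² ≤ 1 - φ(θ) ≤ σ² θ² / 2` on `[-π, π]`, whence `a(y) ≤ 5 |y| / c` and `a(k) ≥ 2k / (π σ²)`.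
By symmetry `a` is harmonic off `0`, and `a(0) = 0`; so the mean of `a` along the walk stopped on
`{0, k}` does not increase, which gives `a(k) P^x(τ_k < τ_0) ≤ a(x)`.
-/

open MeasureTheory ProbabilityTheory Finset Filter

/-- Discrete-time random walk on ℤ started at `x`, built from the step sequence `ξ`. -/
def walk {Ω : Type*} (ξ : ℕ → Ω → ℤ) (x : ℤ) (ω : Ω) (n : ℕ) : ℤ :=
  x + ∑ i ∈ Finset.range n, ξ i ω

open Real
open scoped ENNReal

noncomputable def stepCharFun (p : ℤ → ℝ) (θ : ℝ) : ℝ := ∑' z : ℤ, p z * cos (z * θ)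

section StepCharFun

variable {p : ℤ → ℝ}

lemma norm_mul_le_of_abs_le_one {a b : ℝ} (ha : 0 ≤ a) (hb : |b| ≤ 1) : ‖a * b‖ ≤ a := by
  rw [norm_mul, norm_of_nonneg ha, norm_eq_abs]
  exact mul_le_of_le_one_right ha hb

lemma summable_mul_cos (hp0 : ∀ z, 0 ≤ p z) (hp : Summable p) (θ : ℝ) :
    Summable fun z : ℤ => p z * cos (z * θ) :=
  hp.of_norm_bounded fun z => norm_mul_le_of_abs_le_one (hp0 z) (abs_cos_le_one _)

lemma summable_mul_sin (hp0 : ∀ z, 0 ≤ p z) (hp : Summable p) (θ : ℝ) :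
    Summable fun z : ℤ => p z * sin (z * θ) :=
  hp.of_norm_bounded fun z => norm_mul_le_of_abs_le_one (hp0 z) (abs_sin_le_one _)

lemma continuous_stepCharFun (hp0 : ∀ z, 0 ≤ p z) (hp : Summable p) :
    Continuous (stepCharFun p) :=
  continuous_tsum (fun z => by fun_prop) hp
    fun z θ => norm_mul_le_of_abs_le_one (hp0 z) (abs_cos_le_one _)

lemma stepCharFun_neg (θ : ℝ) : stepCharFun p (-θ) = stepCharFun p θ := by
  simp only [stepCharFun, mul_neg, cos_neg]

lemma tsum_mul_sin_eq_zero (hsymm : ∀ z, p (-z) = p z) (θ : ℝ) :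
    ∑' z : ℤ, p z * sin (z * θ) = 0 := by
  have h := (Equiv.neg ℤ).tsum_eq fun z : ℤ => p z * sin (z * θ)
  simp only [Equiv.neg_apply, hsymm, Int.cast_neg, neg_mul, sin_neg, mul_neg, tsum_neg] at h
  linarith

lemma hasSum_mul_one_sub_cos (hp0 : ∀ z, 0 ≤ p z) (hp1 : HasSum p 1) (θ : ℝ) :
    HasSum (fun z : ℤ => p z * (1 - cos (z * θ))) (1 - stepCharFun p θ) := by
  simp only [mul_sub, mul_one]
  exact hp1.sub (summable_mul_cos hp0 hp1.summable θ).hasSum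

lemma mul_one_sub_cos_nonneg (hp0 : ∀ z, 0 ≤ p z) (z : ℤ) (θ : ℝ) :
    0 ≤ p z * (1 - cos (z * θ)) :=
  mul_nonneg (hp0 z) (sub_nonneg.2 (cos_le_one _))

lemma one_sub_stepCharFun_nonneg (hp0 : ∀ z, 0 ≤ p z) (hp1 : HasSum p 1) (θ : ℝ) :
    0 ≤ 1 - stepCharFun p θ :=
  (hasSum_mul_one_sub_cos hp0 hp1 θ).nonneg (mul_one_sub_cos_nonneg hp0 · θ)

lemma one_sub_stepCharFun_le (hp0 : ∀ z, 0 ≤ p z) (hp1 : HasSum p 1)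
    (hmom : Summable fun z : ℤ => (z : ℝ) ^ 2 * p z) (θ : ℝ) :
    1 - stepCharFun p θ ≤ (∑' z : ℤ, (z : ℝ) ^ 2 * p z) / 2 * θ ^ 2 := by
  have hterm (z : ℤ) : p z * (1 - cos (z * θ)) ≤ (z : ℝ) ^ 2 * p z * (θ ^ 2 / 2) := by
    nlinarith [one_sub_sq_div_two_le_cos (x := (z : ℝ) * θ), hp0 z]
  calc 1 - stepCharFun p θ ≤ ∑' z : ℤ, (z : ℝ) ^ 2 * p z * (θ ^ 2 / 2) :=
        hasSum_le hterm (hasSum_mul_one_sub_cos hp0 hp1 θ) (hmom.mul_right _).hasSum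
    _ = _ := by rw [tsum_mul_right]; ring

lemma exists_ne_zero_pos (hp0 : ∀ z, 0 ≤ p z)
    (hirr : AddSubgroup.closure {z : ℤ | p z ≠ 0} = ⊤) : ∃ z₀ : ℤ, z₀ ≠ 0 ∧ 0 < p z₀ := by
  by_contra! h
  have hsupp : {z : ℤ | p z ≠ 0} ⊆ {0} := fun z hz =>
    by_contra fun hz0 => hz ((h z hz0).antisymm (hp0 z))
  rw [← AddSubgroup.closure_eq_bot_iff, hirr] at hsupp
  exact top_ne_bot hsupp

lemma tsum_sq_mul_pos (hp0 : ∀ z, 0 ≤ p z) (hirr : AddSubgroup.closure {z : ℤ | p z ≠ 0} = ⊤)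
    (hmom : Summable fun z : ℤ => (z : ℝ) ^ 2 * p z) : 0 < ∑' z : ℤ, (z : ℝ) ^ 2 * p z := by
  obtain ⟨z₀, hz₀, hpz₀⟩ := exists_ne_zero_pos hp0 hirr
  exact hmom.tsum_pos (fun z => mul_nonneg (sq_nonneg _) (hp0 z)) z₀
    (mul_pos (by positivity) hpz₀)

lemma stepCharFun_lt_one (hp0 : ∀ z, 0 ≤ p z) (hp1 : HasSum p 1)
    (hirr : AddSubgroup.closure {z : ℤ | p z ≠ 0} = ⊤)
    {θ : ℝ} (hθ0 : θ ≠ 0) (hθ : |θ| ≤ π) : stepCharFun p θ < 1 := by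
  by_contra! h1
  have hzero : ∀ z : ℤ, p z * (1 - cos (z * θ)) = 0 := by
    have hsum := hasSum_mul_one_sub_cos hp0 hp1 θ
    rw [le_antisymm (sub_nonpos.2 h1) (one_sub_stepCharFun_nonneg hp0 hp1 θ)] at hsum
    exact (hasSum_zero_iff_of_nonneg (mul_one_sub_cos_nonneg hp0 · θ)).1 hsum |> congrFun
  -- every step of the walk lies in the subgroup `{z | zθ ∈ 2πℤ}`, which therefore contains `1`
  have hmem_iff (z : ℤ) : z ∈ (zmultiplesHom Real.Angle (θ : Real.Angle)).ker ↔
      ∃ n : ℤ, n * (2 * π) = z * θ := by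
    rw [AddMonoidHom.mem_ker, zmultiplesHom_apply, ← Real.Angle.coe_zsmul,
      Real.Angle.coe_eq_zero_iff]
    simp only [zsmul_eq_mul]
  have hsupp : {z : ℤ | p z ≠ 0} ⊆ (zmultiplesHom Real.Angle (θ : Real.Angle)).ker := by
    intro z hz
    rw [SetLike.mem_coe, hmem_iff, ← cos_eq_one_iff]
    linarith [(mul_eq_zero.1 (hzero z)).resolve_left hz]
  rw [← AddSubgroup.closure_le, hirr, top_le_iff] at hsupp
  obtain ⟨n, hn⟩ := (hmem_iff 1).1 (hsupp ▸ AddSubgroup.mem_top 1)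
  rw [Int.cast_one, one_mul] at hn
  have hn0 : n ≠ 0 := by rintro rfl; simp at hn; exact hθ0 hn.symm
  have : 2 * π ≤ |θ| := by
    rw [← hn, abs_mul, abs_of_pos two_pi_pos]
    exact le_mul_of_one_le_left two_pi_pos.le (by exact_mod_cast Int.one_le_abs hn0)
  linarith [pi_pos]

lemma exists_pos_le_one_sub_stepCharFun (hp0 : ∀ z, 0 ≤ p z) (hp1 : HasSum p 1)
    (hirr : AddSubgroup.closure {z : ℤ | p z ≠ 0} = ⊤) {δ : ℝ} (hδ0 : 0 < δ) (hδπ : δ ≤ π) :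
    ∃ η : ℝ, 0 < η ∧ ∀ θ : ℝ, δ ≤ |θ| → |θ| ≤ π → η ≤ 1 - stepCharFun p θ := by
  have hK : IsCompact (Set.Icc (-π) π ∩ {θ | δ ≤ |θ|}) :=
    isCompact_Icc.inter_right (isClosed_le continuous_const continuous_abs)
  obtain ⟨θ₁, ⟨hθ₁π, hθ₁δ⟩, hmin⟩ := hK.exists_isMinOn
    ⟨π, ⟨neg_le_self pi_pos.le, le_rfl⟩, by simpa [abs_of_pos pi_pos] using hδπ⟩
    (continuous_const.sub (continuous_stepCharFun hp0 hp1.summable)).continuousOn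
  have hθ₁0 : θ₁ ≠ 0 := by
    rintro rfl
    exact hδ0.not_ge (by simpa using hθ₁δ)
  exact ⟨1 - stepCharFun p θ₁, sub_pos.2 (stepCharFun_lt_one hp0 hp1 hirr hθ₁0 (abs_le.2 hθ₁π)),
    fun θ hθδ hθπ => hmin ⟨abs_le.1 hθπ, hθδ⟩⟩

lemma exists_mul_sq_le_one_sub_stepCharFun (hp0 : ∀ z, 0 ≤ p z) (hp1 : HasSum p 1)
    (hirr : AddSubgroup.closure {z : ℤ | p z ≠ 0} = ⊤) :
    ∃ c : ℝ, 0 < c ∧ ∀ θ : ℝ, |θ| ≤ π → c * θ ^ 2 ≤ 1 - stepCharFun p θ := by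
  obtain ⟨z₀, hz₀, hpz₀⟩ := exists_ne_zero_pos hp0 hirr
  have hz₀abs : (1 : ℝ) ≤ |(z₀ : ℝ)| := by exact_mod_cast Int.one_le_abs hz₀
  set δ := π / |(z₀ : ℝ)|
  obtain ⟨η, hη, hfar⟩ := exists_pos_le_one_sub_stepCharFun hp0 hp1 hirr (by positivity)
    (div_le_self pi_pos.le hz₀abs)
  refine ⟨min (p z₀ * (2 / π ^ 2) * z₀ ^ 2) (η / π ^ 2), by positivity, fun θ hθ => ?_⟩
  rcases le_or_gt |θ| δ with hθδ | hθδ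
  · -- near `0` the single term `p z₀ (1 - cos z₀θ)` of `1 - φ(θ)` suffices
    have hz₀θ : |(z₀ : ℝ) * θ| ≤ π := by
      rw [abs_mul]
      calc |(z₀ : ℝ)| * |θ| ≤ |(z₀ : ℝ)| * δ := by gcongr
        _ = π := mul_div_cancel₀ _ (by positivity)
    calc _ ≤ p z₀ * (2 / π ^ 2) * z₀ ^ 2 * θ ^ 2 := by gcongr; exact min_le_left _ _
      _ = p z₀ * (2 / π ^ 2 * (z₀ * θ) ^ 2) := by ring
      _ ≤ p z₀ * (1 - cos (z₀ * θ)) := by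
        gcongr; linarith [cos_le_one_sub_mul_cos_sq hz₀θ]
      _ ≤ 1 - stepCharFun p θ :=
        le_hasSum (hasSum_mul_one_sub_cos hp0 hp1 θ) z₀ fun z _ => mul_one_sub_cos_nonneg hp0 z θ
  · calc _ ≤ η / π ^ 2 * π ^ 2 := by
          gcongr ?_ * ?_
          · exact min_le_right _ _
          · exact sq_le_sq' (abs_le.1 hθ).1 (abs_le.1 hθ).2
      _ = η := div_mul_cancel₀ _ (by positivity)
      _ ≤ 1 - stepCharFun p θ := hfar θ hθδ.le hθ

end StepCharFun

noncomputable def potentialIntegrand (p : ℤ → ℝ) (y : ℤ) (θ : ℝ) : ℝ :=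
  (1 - cos (y * θ)) / (1 - stepCharFun p θ)

noncomputable def potentialKernel (p : ℤ → ℝ) (y : ℤ) : ℝ :=
  ∫ θ in Set.Ioc (-π) π, potentialIntegrand p y θ

lemma intervalIntegral_le_div_of_le_div_sq {f : ℝ → ℝ} {a b C : ℝ} (ha : 0 < a) (hab : a ≤ b)
    (hC : 0 ≤ C) (hf : IntervalIntegrable f volume a b) (hfC : ∀ θ ∈ Set.Icc a b, f θ ≤ C / θ ^ 2) :
    ∫ θ in a..b, f θ ≤ C / a := by
  have h0 : (0 : ℝ) ∉ Set.uIcc a b := by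
    rw [Set.uIcc_of_le hab]; exact fun h => ha.not_ge h.1
  have hb := inv_pos.2 (ha.trans_le hab)
  have hint := integral_zpow (n := -2) (Or.inr ⟨by norm_num, h0⟩)
  simp only [zpow_neg, zpow_ofNat] at hint
  calc ∫ θ in a..b, f θ ≤ ∫ θ in a..b, C * (θ ^ 2)⁻¹ :=
        intervalIntegral.integral_mono_on hab hf
          ((intervalIntegral.intervalIntegrable_zpow (n := -2) (Or.inr h0)).const_mul C)
          fun θ hθ => (hfC θ hθ).trans_eq (div_eq_mul_inv _ _)
    _ ≤ C / a := by
        rw [intervalIntegral.integral_const_mul, hint]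
        norm_num
        rw [div_eq_mul_inv]
        exact mul_le_mul_of_nonneg_left (by linarith) hC

section PotentialKernel

variable {p : ℤ → ℝ} {c : ℝ}

lemma measurable_potentialIntegrand (hp0 : ∀ z, 0 ≤ p z) (hp : Summable p) (y : ℤ) :
    Measurable (potentialIntegrand p y) :=
  (continuous_const.sub (by fun_prop)).measurable.div
    (continuous_const.sub (continuous_stepCharFun hp0 hp)).measurable

lemma potentialIntegrand_nonneg (hp0 : ∀ z, 0 ≤ p z) (hp1 : HasSum p 1) (y : ℤ) (θ : ℝ) :
    0 ≤ potentialIntegrand p y θ :=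
  div_nonneg (sub_nonneg.2 (cos_le_one _)) (one_sub_stepCharFun_nonneg hp0 hp1 θ)

lemma potentialIntegrand_neg (y : ℤ) (θ : ℝ) :
    potentialIntegrand p y (-θ) = potentialIntegrand p y θ := by
  rw [potentialIntegrand, potentialIntegrand, stepCharFun_neg, mul_neg, cos_neg]

lemma potentialIntegrand_le_sq (hc0 : 0 < c)
    (hc : ∀ θ : ℝ, |θ| ≤ π → c * θ ^ 2 ≤ 1 - stepCharFun p θ) (y : ℤ) {θ : ℝ} (hθ : |θ| ≤ π) :
    potentialIntegrand p y θ ≤ (y : ℝ) ^ 2 / (2 * c) := by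
  rcases eq_or_ne θ 0 with rfl | hθ0
  · simp only [potentialIntegrand, mul_zero, cos_zero, sub_self, zero_div]
    positivity
  calc potentialIntegrand p y θ ≤ (y * θ) ^ 2 / 2 / (c * θ ^ 2) :=
        div_le_div₀ (by positivity) (by linarith [one_sub_sq_div_two_le_cos (x := y * θ)])
          (by positivity) (hc θ hθ)
    _ = (y : ℝ) ^ 2 / (2 * c) := by field_simp

lemma potentialIntegrand_le_div_sq (hc0 : 0 < c)
    (hc : ∀ θ : ℝ, |θ| ≤ π → c * θ ^ 2 ≤ 1 - stepCharFun p θ) (y : ℤ) {θ : ℝ} (hθ0 : θ ≠ 0)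
    (hθ : |θ| ≤ π) : potentialIntegrand p y θ ≤ 2 / c / θ ^ 2 := by
  calc potentialIntegrand p y θ ≤ 2 / (c * θ ^ 2) :=
        div_le_div₀ zero_le_two (by linarith [neg_one_le_cos (y * θ)]) (by positivity) (hc θ hθ)
    _ = 2 / c / θ ^ 2 := (div_div _ _ _).symm

lemma integrableOn_potentialIntegrand (hp0 : ∀ z, 0 ≤ p z) (hp1 : HasSum p 1) (hc0 : 0 < c)
    (hc : ∀ θ : ℝ, |θ| ≤ π → c * θ ^ 2 ≤ 1 - stepCharFun p θ) (y : ℤ) :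
    IntegrableOn (potentialIntegrand p y) (Set.Icc (-π) π) :=
  Measure.integrableOn_of_bounded measure_Icc_lt_top.ne
    (measurable_potentialIntegrand hp0 hp1.summable y).aestronglyMeasurable
    (ae_restrict_of_forall_mem measurableSet_Icc fun θ hθ => by
      rw [norm_of_nonneg (potentialIntegrand_nonneg hp0 hp1 y θ)]
      exact potentialIntegrand_le_sq hc0 hc y (abs_le.2 hθ))

lemma intervalIntegrable_potentialIntegrand (hp0 : ∀ z, 0 ≤ p z) (hp1 : HasSum p 1)
    (hc0 : 0 < c) (hc : ∀ θ : ℝ, |θ| ≤ π → c * θ ^ 2 ≤ 1 - stepCharFun p θ) (y : ℤ)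
    {a b : ℝ} (ha : -π ≤ a) (hab : a ≤ b) (hb : b ≤ π) :
    IntervalIntegrable (potentialIntegrand p y) volume a b :=
  ((integrableOn_potentialIntegrand hp0 hp1 hc0 hc y).mono_set
    (by rw [Set.uIcc_of_le hab]; exact Set.Icc_subset_Icc ha hb)).intervalIntegrable

lemma potentialKernel_zero : potentialKernel p 0 = 0 := by
  simp [potentialKernel, potentialIntegrand]

lemma potentialKernel_nonneg (hp0 : ∀ z, 0 ≤ p z) (hp1 : HasSum p 1) (y : ℤ) :
    0 ≤ potentialKernel p y :=
  setIntegral_nonneg measurableSet_Ioc fun θ _ => potentialIntegrand_nonneg hp0 hp1 y θ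

lemma potentialKernel_eq_two_mul (hp0 : ∀ z, 0 ≤ p z) (hp1 : HasSum p 1) (hc0 : 0 < c)
    (hc : ∀ θ : ℝ, |θ| ≤ π → c * θ ^ 2 ≤ 1 - stepCharFun p θ) (y : ℤ) :
    potentialKernel p y = 2 * ∫ θ in 0..π, potentialIntegrand p y θ := by
  have hneg : ∫ θ in -π..0, potentialIntegrand p y θ = ∫ θ in 0..π, potentialIntegrand p y θ := by
    simpa only [potentialIntegrand_neg, neg_zero, neg_neg] using
      intervalIntegral.integral_comp_neg (a := -π) (b := 0) (potentialIntegrand p y)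
  rw [potentialKernel, ← intervalIntegral.integral_of_le (by linarith [pi_pos]),
    ← intervalIntegral.integral_add_adjacent_intervals (b := 0)
      (intervalIntegrable_potentialIntegrand hp0 hp1 hc0 hc y le_rfl (by linarith [pi_pos])
        pi_pos.le)
      (intervalIntegrable_potentialIntegrand hp0 hp1 hc0 hc y (by linarith [pi_pos]) pi_pos.le
        le_rfl), hneg, two_mul]

lemma potentialKernel_le (hp0 : ∀ z, 0 ≤ p z) (hp1 : HasSum p 1) (hc0 : 0 < c)
    (hc : ∀ θ : ℝ, |θ| ≤ π → c * θ ^ 2 ≤ 1 - stepCharFun p θ) (y : ℤ) :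
    potentialKernel p y ≤ 5 / c * |(y : ℝ)| := by
  rcases eq_or_ne y 0 with rfl | hy
  · simp [potentialKernel_zero]
  have hy1 : (1 : ℝ) ≤ |(y : ℝ)| := by exact_mod_cast Int.one_le_abs hy
  have hπ := pi_pos
  -- split `[0, π]` at `t = 1 / |y|`, where the two bounds on the integrand cross
  set t := |(y : ℝ)|⁻¹
  have ht0 : 0 < t := by positivity
  have htπ : t ≤ π := (inv_le_one_of_one_le₀ hy1).trans (by linarith [pi_gt_three])
  have hnear : ∫ θ in 0..t, potentialIntegrand p y θ ≤ t * (y : ℝ) ^ 2 / (2 * c) := by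
    simpa using intervalIntegral.integral_mono_on ht0.le
      (intervalIntegrable_potentialIntegrand hp0 hp1 hc0 hc y (by linarith) ht0.le htπ)
      intervalIntegrable_const fun θ hθ =>
        potentialIntegrand_le_sq hc0 hc y (abs_le.2 ⟨by linarith [hθ.1], by linarith [hθ.2]⟩)
  have hfar : ∫ θ in t..π, potentialIntegrand p y θ ≤ 2 / c / t :=
    intervalIntegral_le_div_of_le_div_sq ht0 htπ (by positivity)
      (intervalIntegrable_potentialIntegrand hp0 hp1 hc0 hc y (by linarith) htπ le_rfl)
      fun θ hθ => potentialIntegrand_le_div_sq hc0 hc y (by linarith [hθ.1])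
        (abs_le.2 ⟨by linarith [hθ.1], hθ.2⟩)
  rw [potentialKernel_eq_two_mul hp0 hp1 hc0 hc y,
    ← intervalIntegral.integral_add_adjacent_intervals
      (intervalIntegrable_potentialIntegrand hp0 hp1 hc0 hc y (by linarith) ht0.le htπ)
      (intervalIntegrable_potentialIntegrand hp0 hp1 hc0 hc y (by linarith) htπ le_rfl)]
  calc _ ≤ 2 * (t * (y : ℝ) ^ 2 / (2 * c) + 2 / c / t) := by gcongr
    _ = 5 / c * |(y : ℝ)| := by
      simp only [t, ← sq_abs (y : ℝ)]
      field_simp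
      norm_num

lemma le_potentialKernel (hp0 : ∀ z, 0 ≤ p z) (hp1 : HasSum p 1)
    (hmom : Summable fun z : ℤ => (z : ℝ) ^ 2 * p z) (hc0 : 0 < c)
    (hc : ∀ θ : ℝ, |θ| ≤ π → c * θ ^ 2 ≤ 1 - stepCharFun p θ)
    (hσ : 0 < ∑' z : ℤ, (z : ℝ) ^ 2 * p z) {k : ℤ} (hk : 1 ≤ k) :
    2 * k / (π * ∑' z : ℤ, (z : ℝ) ^ 2 * p z) ≤ potentialKernel p k := by
  set σ2 := ∑' z : ℤ, (z : ℝ) ^ 2 * p z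
  have hk1 : (1 : ℝ) ≤ k := by exact_mod_cast hk
  have hπ := pi_pos
  have ha0 : 0 < π / (2 * k) := by positivity
  have hab : π / (2 * k) ≤ π / k := by gcongr; linarith
  have hbπ : π / k ≤ π := div_le_self hπ.le hk1
  -- on `[π/2k, π/k]` we have `cos kθ ≤ 0` while `1 - φ(θ) ≤ σ²θ²/2 ≤ σ²π²/2k²`
  have hlow : ∀ θ ∈ Set.Icc (π / (2 * k)) (π / k),
      2 * k ^ 2 / (σ2 * π ^ 2) ≤ potentialIntegrand p k θ := by
    rintro θ ⟨h1, h2⟩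
    have hθ0 : 0 < θ := ha0.trans_le h1
    have hθπ : |θ| ≤ π := abs_le.2 ⟨by linarith, h2.trans hbπ⟩
    have hcos : cos (k * θ) ≤ 0 := by
      apply cos_nonpos_of_pi_div_two_le_of_le
      · rw [div_le_iff₀ (by positivity)] at h1; linarith
      · rw [le_div_iff₀ (by positivity)] at h2; linarith
    have hden : 1 - stepCharFun p θ ≤ σ2 / 2 * (π / k) ^ 2 :=
      (one_sub_stepCharFun_le hp0 hp1 hmom θ).trans (by gcongr)
    calc 2 * k ^ 2 / (σ2 * π ^ 2) = 1 / (σ2 / 2 * (π / k) ^ 2) := by field_simp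
      _ ≤ potentialIntegrand p k θ :=
        div_le_div₀ (by linarith) (by linarith) ((mul_pos hc0 (by positivity)).trans_le (hc θ hθπ))
          hden
  calc 2 * k / (π * σ2) = 2 * ((π / k - π / (2 * k)) * (2 * k ^ 2 / (σ2 * π ^ 2))) := by
        field_simp; ring
    _ ≤ 2 * ∫ θ in (π / (2 * k))..(π / k), potentialIntegrand p k θ := by
        gcongr
        have := intervalIntegral.integral_mono_on hab intervalIntegrable_const
          (intervalIntegrable_potentialIntegrand hp0 hp1 hc0 hc k (by linarith) hab hbπ) hlow
        rwa [intervalIntegral.integral_const, smul_eq_mul] at this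
    _ ≤ 2 * ∫ θ in 0..π, potentialIntegrand p k θ := by
        gcongr
        exact intervalIntegral.integral_mono_interval ha0.le hab hbπ
          (ae_of_all _ (potentialIntegrand_nonneg hp0 hp1 k))
          (intervalIntegrable_potentialIntegrand hp0 hp1 hc0 hc k (by linarith) hπ.le le_rfl)
    _ = potentialKernel p k := (potentialKernel_eq_two_mul hp0 hp1 hc0 hc k).symm

end PotentialKernel

section Harmonic

variable {p : ℤ → ℝ} {c : ℝ}

lemma hasSum_mul_one_sub_cos_add (hp0 : ∀ z, 0 ≤ p z) (hp1 : HasSum p 1)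
    (hsymm : ∀ z, p (-z) = p z) (y : ℤ) (θ : ℝ) :
    HasSum (fun z : ℤ => p z * (1 - cos (((y + z : ℤ) : ℝ) * θ)))
      (1 - cos (y * θ) * stepCharFun p θ) := by
  have hsin : HasSum (fun z : ℤ => p z * sin (z * θ)) 0 :=
    tsum_mul_sin_eq_zero hsymm θ ▸ (summable_mul_sin hp0 hp1.summable θ).hasSum
  have hterm (z : ℤ) : p z * (1 - cos (((y + z : ℤ) : ℝ) * θ)) =
      p z - (cos (y * θ) * (p z * cos (z * θ)) - sin (y * θ) * (p z * sin (z * θ))) := by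
    push_cast
    rw [add_mul, cos_add]
    ring
  have hval : 1 - cos (y * θ) * stepCharFun p θ =
      1 - (cos (y * θ) * stepCharFun p θ - sin (y * θ) * 0) := by ring
  rw [funext hterm, hval]
  exact hp1.sub (((summable_mul_cos hp0 hp1.summable θ).hasSum.mul_left _).sub (hsin.mul_left _))

lemma hasSum_mul_potentialIntegrand_add (hp0 : ∀ z, 0 ≤ p z) (hp1 : HasSum p 1)
    (hsymm : ∀ z, p (-z) = p z) (y : ℤ) {θ : ℝ} (hθ : 1 - stepCharFun p θ ≠ 0) :
    HasSum (fun z : ℤ => p z * potentialIntegrand p (y + z) θ)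
      (potentialIntegrand p y θ + cos (y * θ)) := by
  have hval : potentialIntegrand p y θ + cos (y * θ) =
      (1 - cos (y * θ) * stepCharFun p θ) / (1 - stepCharFun p θ) := by
    rw [potentialIntegrand]
    field_simp
    ring
  rw [hval]
  simp only [potentialIntegrand, ← mul_div_assoc]
  exact (hasSum_mul_one_sub_cos_add hp0 hp1 hsymm y θ).div_const _

lemma integral_cos_int_mul {y : ℤ} (hy : y ≠ 0) :
    ∫ θ in Set.Ioc (-π) π, cos (y * θ) = 0 := by
  rw [← intervalIntegral.integral_of_le (by linarith [pi_pos]),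
    intervalIntegral.integral_comp_mul_left cos (Int.cast_ne_zero.2 hy), integral_cos,
    mul_neg, sin_neg, sin_int_mul_pi]
  simp

lemma summable_mul_potentialKernel_add (hp0 : ∀ z, 0 ≤ p z) (hp1 : HasSum p 1)
    (hmom : Summable fun z : ℤ => (z : ℝ) ^ 2 * p z) (hc0 : 0 < c)
    (hc : ∀ θ : ℝ, |θ| ≤ π → c * θ ^ 2 ≤ 1 - stepCharFun p θ) (y : ℤ) :
    Summable fun z : ℤ => p z * potentialKernel p (y + z) := by
  refine Summable.of_nonneg_of_le (fun z => mul_nonneg (hp0 z) (potentialKernel_nonneg hp0 hp1 _))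
    (fun z => ?_) (((hp1.summable.mul_left |(y : ℝ)|).add hmom).mul_left (5 / c))
  have hz : |(z : ℝ)| ≤ (z : ℝ) ^ 2 := by
    rw [← sq_abs]; exact_mod_cast Int.le_self_sq |z|
  calc p z * potentialKernel p (y + z) ≤ p z * (5 / c * (|(y : ℝ)| + (z : ℝ) ^ 2)) := by
        gcongr
        · exact hp0 z
        · refine (potentialKernel_le hp0 hp1 hc0 hc _).trans ?_
          push_cast
          gcongr
          exact (abs_add_le _ _).trans (by gcongr)
    _ = 5 / c * (|(y : ℝ)| * p z + (z : ℝ) ^ 2 * p z) := by ring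

lemma tsum_mul_potentialKernel_add (hp0 : ∀ z, 0 ≤ p z) (hp1 : HasSum p 1)
    (hsymm : ∀ z, p (-z) = p z) (hmom : Summable fun z : ℤ => (z : ℝ) ^ 2 * p z) (hc0 : 0 < c)
    (hc : ∀ θ : ℝ, |θ| ≤ π → c * θ ^ 2 ≤ 1 - stepCharFun p θ) {y : ℤ} (hy : y ≠ 0) :
    ∑' z : ℤ, p z * potentialKernel p (y + z) = potentialKernel p y := by
  have hint (w : ℤ) : IntegrableOn (potentialIntegrand p w) (Set.Ioc (-π) π) :=
    (integrableOn_potentialIntegrand hp0 hp1 hc0 hc w).mono_set Set.Ioc_subset_Icc_self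
  have hnorm (z : ℤ) : ∫ θ in Set.Ioc (-π) π, ‖p z * potentialIntegrand p (y + z) θ‖ =
      p z * potentialKernel p (y + z) := by
    simp_rw [norm_of_nonneg (mul_nonneg (hp0 z) (potentialIntegrand_nonneg hp0 hp1 _ _))]
    exact integral_const_mul _ _
  have hae : ∀ᵐ θ ∂volume.restrict (Set.Ioc (-π) π),
      ∑' z : ℤ, p z * potentialIntegrand p (y + z) θ = potentialIntegrand p y θ + cos (y * θ) := by
    filter_upwards [ae_restrict_mem measurableSet_Ioc, ae_restrict_of_ae (Measure.ae_ne volume 0)]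
      with θ hθ hθ0
    have hθπ : |θ| ≤ π := abs_le.2 ⟨hθ.1.le, hθ.2⟩
    exact (hasSum_mul_potentialIntegrand_add hp0 hp1 hsymm y
      ((mul_pos hc0 (by positivity)).trans_le (hc θ hθπ)).ne').tsum_eq
  calc ∑' z : ℤ, p z * potentialKernel p (y + z)
      = ∑' z : ℤ, ∫ θ in Set.Ioc (-π) π, p z * potentialIntegrand p (y + z) θ :=
        tsum_congr fun z => (integral_const_mul _ _).symm
    _ = ∫ θ in Set.Ioc (-π) π, ∑' z : ℤ, p z * potentialIntegrand p (y + z) θ :=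
        integral_tsum_of_summable_integral_norm (fun z => (hint (y + z)).const_mul (p z))
          (by simpa only [hnorm] using summable_mul_potentialKernel_add hp0 hp1 hmom hc0 hc y)
    _ = potentialKernel p y + ∫ θ in Set.Ioc (-π) π, cos (y * θ) := by
        rw [integral_congr_ae hae,
          integral_add (hint y) (by fun_prop : Continuous _).integrableOn_Ioc, potentialKernel]
    _ = potentialKernel p y := by rw [integral_cos_int_mul hy, add_zero]

end Harmonic

open Classical in
noncomputable def stopStep (A : Set ℤ) (v z : ℤ) : ℤ := if v ∈ A then v else v + z

noncomputable def stoppedWalk (A : Set ℤ) (x : ℤ) (s : ℕ → ℤ) : ℕ → ℤ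
  | 0 => x
  | n + 1 => stopStep A (stoppedWalk A x s n) (s n)

section StoppedWalk

variable {A : Set ℤ} {x : ℤ}

lemma stoppedWalk_congr {s t : ℕ → ℤ} {n : ℕ} (h : ∀ i < n, s i = t i) :
    stoppedWalk A x s n = stoppedWalk A x t n := by
  induction n with
  | zero => rfl
  | succ n ih => rw [stoppedWalk, stoppedWalk, ih fun i hi => h i (by omega), h n n.lt_succ_self]

lemma stoppedWalk_of_le_of_mem {s : ℕ → ℤ} {n N : ℕ} (hnN : n ≤ N)
    (h : stoppedWalk A x s n ∈ A) : stoppedWalk A x s N = stoppedWalk A x s n := by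
  induction N, hnN using Nat.le_induction with
  | base => rfl
  | succ N _ ih => rw [stoppedWalk, ih, stopStep, if_pos h]

lemma stoppedWalk_eq_walk {Ω : Type*} (ξ : ℕ → Ω → ℤ) (ω : Ω) {n : ℕ}
    (h : ∀ m < n, walk ξ x ω m ∉ A) : stoppedWalk A x (ξ · ω) n = walk ξ x ω n := by
  induction n with
  | zero => simp [stoppedWalk, walk]
  | succ n ih =>
    rw [stoppedWalk, ih fun m hm => h m (by omega), stopStep, if_neg (h n n.lt_succ_self), walk,
      walk, sum_range_succ, add_assoc]

variable {Ω : Type*} [MeasurableSpace Ω] {ξ : ℕ → Ω → ℤ}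

lemma measurable_stoppedWalk (hmeas : ∀ i, Measurable (ξ i)) (n : ℕ) :
    Measurable fun ω => stoppedWalk A x (ξ · ω) n := by
  induction n with
  | zero => exact measurable_const
  | succ n ih =>
    exact (measurable_of_countable (Function.uncurry (stopStep A))).comp (ih.prodMk (hmeas n))

lemma indepFun_stoppedWalk {μ : Measure Ω} (hmeas : ∀ i, Measurable (ξ i))
    (hiid : iIndepFun ξ μ) (n : ℕ) :
    IndepFun (fun ω => stoppedWalk A x (ξ · ω) n) (ξ n) μ := by
  -- `Yₙ` is a function of the steps with index in `range n`, and `ξ n` of the one in `{n}`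
  have hpast : (fun ω => stoppedWalk A x (ξ · ω) n) =
      (fun v : range n → ℤ =>
          stoppedWalk A x (fun i => if h : i ∈ range n then v ⟨i, h⟩ else 0) n) ∘
        fun ω (i : range n) => ξ i ω := by
    funext ω
    exact stoppedWalk_congr fun i hi => by simp [mem_range.2 hi]
  have hnow : ξ n = (fun v : ({n} : Finset ℕ) → ℤ => v ⟨n, mem_singleton_self n⟩) ∘
      fun ω (i : ({n} : Finset ℕ)) => ξ i ω := rfl
  rw [hpast, hnow]
  exact (hiid.indepFun_finset _ _ (by simp) hmeas).comp (measurable_of_countable _)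
    (measurable_of_countable _)

variable {μ : Measure Ω} [IsProbabilityMeasure μ] {ν : Measure ℤ} [IsProbabilityMeasure ν]

lemma lintegral_stoppedWalk_le (hmeas : ∀ i, Measurable (ξ i)) (hiid : iIndepFun ξ μ)
    (hlaw : ∀ n, μ.map (ξ n) = ν) {h : ℤ → ℝ≥0∞} (hh : ∀ v ∉ A, ∫⁻ z, h (v + z) ∂ν ≤ h v)
    (n : ℕ) : ∫⁻ ω, h (stoppedWalk A x (ξ · ω) n) ∂μ ≤ h x := by
  induction n with
  | zero => simp [stoppedWalk]
  | succ n ih =>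
    set Y := fun ω => stoppedWalk A x (ξ · ω) n
    have hY : Measurable Y := measurable_stoppedWalk hmeas n
    have hpair : μ.map (fun ω => (Y ω, ξ n ω)) = (μ.map Y).prod ν := by
      rw [← hlaw n]
      exact (indepFun_iff_map_prod_eq_prod_map_map hY.aemeasurable (hmeas n).aemeasurable).1
        (indepFun_stoppedWalk hmeas hiid n)
    calc ∫⁻ ω, h (stoppedWalk A x (ξ · ω) (n + 1)) ∂μ
        = ∫⁻ q, h (stopStep A q.1 q.2) ∂(μ.map fun ω => (Y ω, ξ n ω)) :=
          (lintegral_map (f := fun q : ℤ × ℤ => h (stopStep A q.1 q.2))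
            (measurable_of_countable _) (hY.prodMk (hmeas n))).symm
      _ = ∫⁻ v, ∫⁻ z, h (stopStep A v z) ∂ν ∂(μ.map Y) := by
          rw [hpair, lintegral_prod _ (measurable_of_countable _).aemeasurable]
      _ ≤ ∫⁻ v, h v ∂(μ.map Y) := lintegral_mono fun v => by
          by_cases hv : v ∈ A
          · simp [stopStep, hv]
          · simpa [stopStep, hv] using hh v hv
      _ = ∫⁻ ω, h (Y ω) ∂μ := lintegral_map (measurable_of_countable _) hY
      _ ≤ h x := ih

lemma mul_measure_hit_before_le (hmeas : ∀ i, Measurable (ξ i)) (hiid : iIndepFun ξ μ)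
    (hlaw : ∀ n, μ.map (ξ n) = ν) {k : ℤ} {h : ℤ → ℝ≥0∞}
    (hh : ∀ v, v ≠ 0 → v ≠ k → ∫⁻ z, h (v + z) ∂ν ≤ h v) :
    h k * μ {ω | ∃ n : ℕ, walk ξ x ω n = k ∧ ∀ m : ℕ, m ≤ n → walk ξ x ω m ≠ 0} ≤ h x := by
  classical
  set Y := fun N ω => stoppedWalk {0, k} x (ξ · ω) N
  have hsub : {ω | ∃ n : ℕ, walk ξ x ω n = k ∧ ∀ m : ℕ, m ≤ n → walk ξ x ω m ≠ 0} ⊆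
      ⋃ N, Y N ⁻¹' {k} := by
    rintro ω ⟨n, hnk, hn0⟩
    have hex : ∃ m, walk ξ x ω m ∈ ({0, k} : Set ℤ) := ⟨n, Or.inr hnk⟩
    have hmn : Nat.find hex ≤ n := Nat.find_min' hex (Or.inr hnk)
    refine Set.mem_iUnion.2 ⟨Nat.find hex, ?_⟩
    exact (stoppedWalk_eq_walk ξ ω fun m hm => Nat.find_min hex hm).trans
      ((Nat.find_spec hex).resolve_left (hn0 _ hmn))
  have hmono : Monotone fun N => Y N ⁻¹' {k} := by
    refine monotone_nat_of_le_succ fun N ω (hω : Y N ω = k) => ?_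
    have hA : Y N ω ∈ ({0, k} : Set ℤ) := Or.inr hω
    exact (stoppedWalk_of_le_of_mem N.le_succ hA).trans hω
  have hN (N : ℕ) : h k * μ (Y N ⁻¹' {k}) ≤ h x :=
    calc h k * μ (Y N ⁻¹' {k}) = ∫⁻ ω, (Y N ⁻¹' {k}).indicator (fun _ => h k) ω ∂μ :=
          (lintegral_indicator_const (measurable_stoppedWalk hmeas N (measurableSet_singleton k))
            _).symm
      _ ≤ ∫⁻ ω, h (Y N ω) ∂μ := lintegral_mono <|
          Set.indicator_le' (fun ω (hω : Y N ω = k) => hω ▸ le_rfl) fun _ _ => bot_le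
      _ ≤ h x := lintegral_stoppedWalk_le hmeas hiid hlaw
          (fun v hv => hh v (fun h0 => hv (Or.inl h0)) fun hk => hv (Or.inr hk)) N
  calc _ ≤ h k * μ (⋃ N, Y N ⁻¹' {k}) := by gcongr
    _ = ⨆ N, h k * μ (Y N ⁻¹' {k}) := by rw [hmono.measure_iUnion, ENNReal.mul_iSup]
    _ ≤ h x := iSup_le hN

end StoppedWalk

lemma lintegral_ofReal_potentialKernel_add {p : ℤ → ℝ} {c : ℝ} (hp0 : ∀ z, 0 ≤ p z)
    (hp1 : HasSum p 1) (hsymm : ∀ z, p (-z) = p z) (hmom : Summable fun z : ℤ => (z : ℝ) ^ 2 * p z)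
    (hc0 : 0 < c) (hc : ∀ θ : ℝ, |θ| ≤ π → c * θ ^ 2 ≤ 1 - stepCharFun p θ)
    {ν : Measure ℤ} (hν : ∀ z, ν {z} = ENNReal.ofReal (p z)) {y : ℤ} (hy : y ≠ 0) :
    ∫⁻ z, ENNReal.ofReal (potentialKernel p (y + z)) ∂ν = ENNReal.ofReal (potentialKernel p y) := by
  rw [lintegral_countable', ← tsum_mul_potentialKernel_add hp0 hp1 hsymm hmom hc0 hc hy,
    ENNReal.ofReal_tsum_of_nonneg (fun z => mul_nonneg (hp0 z) (potentialKernel_nonneg hp0 hp1 _))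
      (summable_mul_potentialKernel_add hp0 hp1 hmom hc0 hc y)]
  congr 1 with z
  rw [hν, ENNReal.ofReal_mul (hp0 z), mul_comm]

lemma measure_hit_before_le_div {Ω : Type*} [MeasurableSpace Ω] {μ : Measure Ω}
    [IsProbabilityMeasure μ] {p : ℤ → ℝ} {c : ℝ} (hp0 : ∀ z, 0 ≤ p z) (hp1 : HasSum p 1)
    (hsymm : ∀ z, p (-z) = p z) (hmom : Summable fun z : ℤ => (z : ℝ) ^ 2 * p z) (hc0 : 0 < c)
    (hc : ∀ θ : ℝ, |θ| ≤ π → c * θ ^ 2 ≤ 1 - stepCharFun p θ) {ξ : ℕ → Ω → ℤ}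
    (hmeas : ∀ i, Measurable (ξ i)) (hiid : iIndepFun ξ μ)
    (hlaw : ∀ n z, μ.map (ξ n) {z} = ENNReal.ofReal (p z)) (x : ℤ) {k : ℤ}
    (hk : 0 < potentialKernel p k) :
    (μ {ω | ∃ n : ℕ, walk ξ x ω n = k ∧ ∀ m : ℕ, m ≤ n → walk ξ x ω m ≠ 0}).toReal ≤
      potentialKernel p x / potentialKernel p k := by
  have : IsProbabilityMeasure (μ.map (ξ 0)) :=
    Measure.isProbabilityMeasure_map (hmeas 0).aemeasurable
  have hhit := mul_measure_hit_before_le (x := x) (k := k) hmeas hiid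
    (fun n => Measure.ext_iff_singleton.2 fun z => by rw [hlaw, hlaw])
    fun v hv _ => (lintegral_ofReal_potentialKernel_add hp0 hp1 hsymm hmom hc0 hc (hlaw 0) hv).le
  have := ENNReal.toReal_mono ENNReal.ofReal_ne_top hhit
  rwa [ENNReal.toReal_mul, ENNReal.toReal_ofReal hk.le,
    ENNReal.toReal_ofReal (potentialKernel_nonneg hp0 hp1 x), ← le_div_iff₀' hk] at this

theorem stmt1_general
    {Ω : Type*} [MeasurableSpace Ω] (μ : Measure Ω) [IsProbabilityMeasure μ]
    (p : ℤ → ℝ) (hp0 : ∀ z, 0 ≤ p z) (hp1 : HasSum p 1)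
    (hsymm : ∀ z, p (-z) = p z)
    (hirr : AddSubgroup.closure {z : ℤ | p z ≠ 0} = ⊤)
    (hmom : Summable fun z : ℤ => (z : ℝ) ^ 2 * p z)
    (ξ : ℕ → Ω → ℤ) (hmeas : ∀ i, Measurable (ξ i))
    (hiid : iIndepFun ξ μ)
    (hstep : ∀ i z, (μ {ω | ξ i ω = z}).toReal = p z) :
    ∃ γ : ℝ, 0 < γ ∧ ∀ x k : ℤ, 0 ≤ x → x ≤ k →
      (μ {ω | ∃ n : ℕ, walk ξ x ω n = k ∧
          ∀ m : ℕ, m ≤ n → walk ξ x ω m ≠ 0}).toReal ≤ γ * (x : ℝ) / (k : ℝ) := by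
  obtain ⟨c, hc0, hc⟩ := exists_mul_sq_le_one_sub_stepCharFun hp0 hp1 hirr
  have hσ := tsum_sq_mul_pos hp0 hirr hmom
  have hlaw (n : ℕ) (z : ℤ) : μ.map (ξ n) {z} = ENNReal.ofReal (p z) := by
    rw [Measure.map_apply (hmeas n) (measurableSet_singleton z), ← hstep n z,
      ENNReal.ofReal_toReal (measure_ne_top _ _)]
    rfl
  refine ⟨5 * π * (∑' z : ℤ, (z : ℝ) ^ 2 * p z) / (2 * c), by positivity, fun x k hx hxk => ?_⟩
  rcases hx.eq_or_lt with rfl | hx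
  · have hempty : {ω | ∃ n : ℕ, walk ξ 0 ω n = k ∧ ∀ m : ℕ, m ≤ n → walk ξ 0 ω m ≠ 0} = ∅ :=
      Set.eq_empty_of_forall_notMem fun ω ⟨n, _, h0⟩ => h0 0 n.zero_le (by simp [walk])
    simp [hempty]
  have hk : 1 ≤ k := hx.trans_le hxk
  have hak := le_potentialKernel hp0 hp1 hmom hc0 hc hσ hk
  calc _ ≤ potentialKernel p x / potentialKernel p k :=
        measure_hit_before_le_div hp0 hp1 hsymm hmom hc0 hc hmeas hiid hlaw x
          (lt_of_lt_of_le (by positivity) hak)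
    _ ≤ 5 / c * |(x : ℝ)| / (2 * k / (π * ∑' z : ℤ, (z : ℝ) ^ 2 * p z)) :=
        div_le_div₀ (by positivity) (potentialKernel_le hp0 hp1 hc0 hc x) (by positivity) hak
    _ = _ := by rw [abs_of_pos (by exact_mod_cast hx)]; field_simp

/-- `P^x(τ_k < τ_0) ≤ γ x / k` for `0 ≤ x ≤ k`. -/
theorem stmt1
    {Ω : Type*} [MeasurableSpace Ω] (μ : Measure Ω) [IsProbabilityMeasure μ]
    (p : ℤ → ℝ) (hp0 : ∀ z, 0 ≤ p z) (hp1 : HasSum p 1)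
    (hsymm : ∀ z, p (-z) = p z)
    (hirr : AddSubgroup.closure {z : ℤ | p z ≠ 0} = ⊤)
    (hmom : Summable fun z : ℤ => (z : ℝ) ^ 2 * p z)
    (ξ : ℕ → Ω → ℤ) (hmeas : ∀ i, Measurable (ξ i))
    (hiid : iIndepFun ξ μ)
    (hstep : ∀ i z, (μ {ω | ξ i ω = z}).toReal = p z)
    (hmean : HasSum (fun z : ℤ => (z : ℝ) * p z) 0) :
    ∃ γ : ℝ, 0 < γ ∧ ∀ x k : ℤ, 0 ≤ x → x ≤ k →
      (μ {ω | ∃ n : ℕ, walk ξ x ω n = k ∧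
          ∀ m : ℕ, m ≤ n → walk ξ x ω m ≠ 0}).toReal ≤ γ * (x : ℝ) / (k : ℝ) :=
  stmt1_general μ p hp0 hp1 hsymm hirr hmom ξ hmeas hiid hstep
end

section
/- Let Z be a symmetric irreducible random walk on ℤ with finite second moment. Then 2^r · P^k(Z(τ_{I_{k,r}^c}) > 3k2^r/2) → 0 as k2^r → ∞; in particular, for every ε > 0 there are only finitely many pairs (k,r) of positive integers with 2^r P^k(Z(τ_{I_{k,r}^c}) > 3k2^r/2) ≥ ε. -/
open MeasureTheory ProbabilityTheory Finset Filter

/-!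
Write `L = k 2^r`. To leave `(0, L)` above `3L/2` the walk must jump by more than `L/2` from
a site of `(0, L)`; that jump is independent of the path before it, so the probability is at most
`E_k[τ] · P(ξ > L/2)`, where `E_k[τ] = ∑_y G(k, y)` for the Green function `G` of the walk killed
on leaving `(0, L)`. By symmetry and a first-step argument `G(·, ·)` is maximal on the diagonal,
and the energy identity `⟨g, (I - P) g⟩ = ½ ∑_z p(z) ∑_y (g(y) - g(y - z))²`, applied to
`g = G(k, ·)` and combined with Cauchy–Schwarz along the chain `k, k - a, …, k - k a` (which
leaves `(0, L)`), gives `p(a) G(k, k) ≤ 2k` for any `a > 0` with `p(a) > 0`; such an `a` exists by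
irreducibility. Hence `E_k[τ] ≤ 2kL / p(a)`, while Chebyshev gives
`P(ξ > L/2) ≤ 4 L⁻² ∑_{2z > L} z² p(z)`. Multiplying by `2^r = L / k` leaves
`8 / p(a) · ∑_{2z > L} z² p(z)`, which tends to `0` by the finite second moment.
-/

section KilledKernel

variable (p : ℤ → ℝ) (D : Finset ℤ)

def killedKernel : Matrix D D ℝ := Matrix.of fun x y => p (y - x)

@[simp]
lemma killedKernel_apply (x y : D) : killedKernel p D x y = p (y - x) := rfl

def killedGreen (N : ℕ) : Matrix D D ℝ := ∑ n ∈ range N, killedKernel p D ^ n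

variable {p D}

lemma killedKernel_pow_nonneg (hp0 : ∀ z, 0 ≤ p z) (n : ℕ) (x y : D) :
    0 ≤ (killedKernel p D ^ n) x y := by
  induction n generalizing y with
  | zero => by_cases h : x = y <;> simp [h]
  | succ n ih =>
    rw [pow_succ, Matrix.mul_apply]
    exact sum_nonneg fun z _ => mul_nonneg (ih z) (hp0 _)

lemma killedGreen_nonneg (hp0 : ∀ z, 0 ≤ p z) (N : ℕ) (x y : D) :
    0 ≤ killedGreen p D N x y := by
  rw [killedGreen, Matrix.sum_apply]
  exact sum_nonneg fun n _ => killedKernel_pow_nonneg hp0 n x y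

lemma killedGreen_comm (hsymm : ∀ z, p (-z) = p z) (N : ℕ) (x y : D) :
    killedGreen p D N x y = killedGreen p D N y x := by
  have hQ : (killedKernel p D).transpose = killedKernel p D := by
    ext x y
    simp only [Matrix.transpose_apply, killedKernel_apply, ← hsymm (y - x), neg_sub]
  have hG : (killedGreen p D N).transpose = killedGreen p D N := by
    simp only [killedGreen, Matrix.transpose_sum, Matrix.transpose_pow, hQ]
  exact congrFun (congrFun hG y) x

lemma sum_killedKernel_le_one (hp0 : ∀ z, 0 ≤ p z) (hp1 : HasSum p 1) (x : D) :
    ∑ y, killedKernel p D x y ≤ 1 := by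
  have hshift : HasSum (fun y => p (y - x)) 1 := (Equiv.subRight (x : ℤ)).hasSum_iff.2 hp1
  simp only [killedKernel_apply]
  rw [Finset.sum_coe_sort D (fun y => p (y - x))]
  exact sum_le_hasSum D (fun y _ => hp0 _) hshift

lemma killedGreen_le_diag (hp0 : ∀ z, 0 ≤ p z) (hp1 : HasSum p 1) (N : ℕ) (x y : D) :
    killedGreen p D N y x ≤ killedGreen p D N x x := by
  induction N generalizing y with
  | zero => simp [killedGreen]
  | succ N ih =>
    rcases eq_or_ne y x with rfl | hyx
    · rfl
    have hfirst :
        killedGreen p D (N + 1) y x = ∑ z, killedKernel p D y z * killedGreen p D N z x := by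
      simp [killedGreen, geom_sum_succ, Matrix.add_apply, Matrix.mul_apply, hyx]
    calc killedGreen p D (N + 1) y x
        = ∑ z, killedKernel p D y z * killedGreen p D N z x := hfirst
      _ ≤ ∑ z, killedKernel p D y z * killedGreen p D N x x :=
          sum_le_sum fun z _ => mul_le_mul_of_nonneg_left (ih z) (hp0 _)
      _ ≤ killedGreen p D N x x := by
          rw [← sum_mul]
          exact mul_le_of_le_one_left (killedGreen_nonneg hp0 N x x)
            (sum_killedKernel_le_one hp0 hp1 y)
      _ ≤ killedGreen p D (N + 1) x x := by
          simp only [killedGreen, geom_sum_succ', Matrix.add_apply]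
          exact le_add_of_nonneg_left (killedKernel_pow_nonneg hp0 N x x)

end KilledKernel

section Dirichlet

-- `⟨f, (I - P) f⟩` for the transition operator `P` of `p` and `f` supported on `D`.
def dirichletForm (p : ℤ → ℝ) (D : Finset ℤ) (f : ℤ → ℝ) : ℝ :=
  ∑ y ∈ D, f y ^ 2 - ∑ y ∈ D, ∑ x ∈ D, f x * f y * p (y - x)

variable {p f : ℤ → ℝ} {D : Finset ℤ}

lemma hasSum_sq_sub_shift (hf : ∀ y ∉ D, f y = 0) (z : ℤ) :
    HasSum (fun y => (f y - f (y - z)) ^ 2)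
      (2 * ∑ y ∈ D, f y ^ 2 - 2 * ∑ y ∈ D, f y * f (y - z)) := by
  have hsq : HasSum (fun y => f y ^ 2) (∑ y ∈ D, f y ^ 2) :=
    hasSum_sum_of_ne_finset_zero fun y hy => by simp [hf y hy]
  have hsq_shift : HasSum (fun y => f (y - z) ^ 2) (∑ y ∈ D, f y ^ 2) :=
    (Equiv.subRight z).hasSum_iff.2 hsq
  have hcross : HasSum (fun y => f y * f (y - z)) (∑ y ∈ D, f y * f (y - z)) :=
    hasSum_sum_of_ne_finset_zero fun y hy => by simp [hf y hy]
  have h : HasSum (fun y => f y ^ 2 + f (y - z) ^ 2 - 2 * (f y * f (y - z)))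
      (∑ y ∈ D, f y ^ 2 + ∑ y ∈ D, f y ^ 2 - 2 * ∑ y ∈ D, f y * f (y - z)) :=
    (hsq.add hsq_shift).sub (hcross.mul_left 2)
  convert h using 1
  · funext y; ring
  · ring

lemma hasSum_dirichletForm (hp1 : HasSum p 1) (hf : ∀ y ∉ D, f y = 0) :
    HasSum (fun z => p z * ∑' y, (f y - f (y - z)) ^ 2) (2 * dirichletForm p D f) := by
  have hconv : ∀ y, HasSum (fun z => f (y - z) * p z) (∑ x ∈ D, f x * p (y - x)) := by
    intro y
    have h := (Equiv.subLeft y).hasSum_iff.2 (hasSum_sum_of_ne_finset_zero (s := D)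
      (f := fun x => f x * p (y - x)) fun x hx => by simp [hf x hx])
    simpa [Function.comp_def] using h
  have hcross : HasSum (fun z => ∑ y ∈ D, f y * (f (y - z) * p z))
      (∑ y ∈ D, f y * ∑ x ∈ D, f x * p (y - x)) :=
    hasSum_sum fun y _ => (hconv y).mul_left (f y)
  have h : HasSum (fun z => (2 * ∑ y ∈ D, f y ^ 2) * p z
        - 2 * ∑ y ∈ D, f y * (f (y - z) * p z))
      ((2 * ∑ y ∈ D, f y ^ 2) * 1 - 2 * ∑ y ∈ D, f y * ∑ x ∈ D, f x * p (y - x)) :=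
    (hp1.mul_left _).sub (hcross.mul_left 2)
  convert h using 1
  · funext z
    have hfactor : ∑ y ∈ D, f y * (f (y - z) * p z) = (∑ y ∈ D, f y * f (y - z)) * p z := by
      rw [sum_mul]
      exact sum_congr rfl fun _ _ => by ring
    rw [(hasSum_sq_sub_shift hf z).tsum_eq, hfactor]
    ring
  · have hswap : ∑ y ∈ D, f y * ∑ x ∈ D, f x * p (y - x)
        = ∑ y ∈ D, ∑ x ∈ D, f x * f y * p (y - x) :=
      sum_congr rfl fun y _ => by rw [mul_sum]; exact sum_congr rfl fun _ _ => by ring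
    rw [hswap, dirichletForm]
    ring

lemma sq_le_mul_sum_sq_sub_shift (f : ℤ → ℝ) (x a : ℤ) (m : ℕ) (hm : f (x - m * a) = 0) :
    f x ^ 2 ≤ m * ∑ j ∈ range m, (f (x - j * a) - f (x - (j + 1) * a)) ^ 2 := by
  have htelescope : ∑ j ∈ range m, (f (x - j * a) - f (x - (j + 1) * a)) = f x := by
    have := sum_range_sub' (fun j : ℕ => f (x - j * a)) m
    push_cast at this
    rw [this, hm]
    simp
  have hcs := sum_mul_sq_le_sq_mul_sq (range m) (fun j => f (x - j * a) - f (x - (j + 1) * a))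
    (fun _ => 1)
  simp only [mul_one, one_pow, sum_const, card_range, nsmul_eq_mul, htelescope] at hcs
  linarith

lemma sum_sq_sub_shift_le_tsum (hf : ∀ y ∉ D, f y = 0) {a : ℤ} (ha : a ≠ 0) (x : ℤ) (m : ℕ) :
    ∑ j ∈ range m, (f (x - j * a) - f (x - (j + 1) * a)) ^ 2
      ≤ ∑' y, (f y - f (y - a)) ^ 2 := by
  have hinj : Set.InjOn (fun j : ℕ => x - j * a) (range m) := by
    intro i _ j _ h
    simpa [ha] using h
  calc ∑ j ∈ range m, (f (x - j * a) - f (x - (j + 1) * a)) ^ 2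
      = ∑ y ∈ (range m).image (fun j : ℕ => x - j * a), (f y - f (y - a)) ^ 2 := by
        rw [sum_image hinj]
        exact sum_congr rfl fun j _ => by ring_nf
    _ ≤ ∑' y, (f y - f (y - a)) ^ 2 :=
        (hasSum_sq_sub_shift hf a).summable.sum_le_tsum _ fun y _ => sq_nonneg _

lemma mul_sq_le_dirichletForm (hp0 : ∀ z, 0 ≤ p z) (hp1 : HasSum p 1)
    (hf : ∀ y ∉ D, f y = 0) {a : ℤ} (ha : a ≠ 0) {x : ℤ} {m : ℕ} (hm : f (x - m * a) = 0) :
    p a * f x ^ 2 ≤ 2 * m * dirichletForm p D f := by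
  have henergy : p a * ∑' y, (f y - f (y - a)) ^ 2 ≤ 2 * dirichletForm p D f :=
    le_hasSum (hasSum_dirichletForm hp1 hf) a fun z _ =>
      mul_nonneg (hp0 z) (tsum_nonneg fun y => sq_nonneg _)
  calc p a * f x ^ 2
      ≤ p a * (m * ∑' y, (f y - f (y - a)) ^ 2) := by
        gcongr
        · exact hp0 a
        · exact (sq_le_mul_sum_sq_sub_shift f x a m hm).trans
            (mul_le_mul_of_nonneg_left (sum_sq_sub_shift_le_tsum hf ha x m) m.cast_nonneg)
    _ = m * (p a * ∑' y, (f y - f (y - a)) ^ 2) := by ring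
    _ ≤ 2 * m * dirichletForm p D f := by nlinarith [m.cast_nonneg (α := ℝ)]

end Dirichlet

section GreenBound

variable {p : ℤ → ℝ} {D : Finset ℤ}

lemma killedGreen_mul_killedKernel (N : ℕ) :
    killedGreen p D N * killedKernel p D = killedGreen p D N - 1 + killedKernel p D ^ N := by
  have h := geom_sum_mul (killedKernel p D) N
  rw [mul_sub, mul_one, sub_eq_iff_eq_add] at h
  rw [killedGreen, h]
  abel

lemma dirichletForm_killedGreen_le (hp0 : ∀ z, 0 ≤ p z) (N : ℕ) (x : D) :
    dirichletForm p D (Function.extend Subtype.val (killedGreen p D N x) 0)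
      ≤ killedGreen p D N x x := by
  have hg : ∀ y : D,
      Function.extend Subtype.val (killedGreen p D N x) 0 y = killedGreen p D N x y :=
    Subtype.val_injective.extend_apply _ _
  have hrow : ∀ y : D, ∑ z : D, killedGreen p D N x z * killedGreen p D N x y * p (y - z)
      = killedGreen p D N x y * (killedGreen p D N x y - (1 : Matrix D D ℝ) x y
          + (killedKernel p D ^ N) x y) := by
    intro y
    have h := congrFun (congrFun (killedGreen_mul_killedKernel (p := p) (D := D) N) x) y
    simp only [Matrix.mul_apply, Matrix.add_apply, Matrix.sub_apply, killedKernel_apply] at h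
    rw [← h, mul_sum]
    exact sum_congr rfl fun z _ => by ring
  calc dirichletForm p D (Function.extend Subtype.val (killedGreen p D N x) 0)
      = ∑ y : D, killedGreen p D N x y ^ 2 - ∑ y : D, killedGreen p D N x y *
          (killedGreen p D N x y - (1 : Matrix D D ℝ) x y + (killedKernel p D ^ N) x y) := by
        simp only [dirichletForm, ← sum_coe_sort D, hg, hrow]
    _ = killedGreen p D N x x
          - ∑ y : D, killedGreen p D N x y * (killedKernel p D ^ N) x y := by
        simp only [mul_add, mul_sub, sum_add_distrib, sum_sub_distrib, Matrix.one_apply,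
          mul_ite, mul_one, mul_zero, sum_ite_eq, mem_univ, if_true, sq]
        ring
    _ ≤ killedGreen p D N x x := sub_le_self _ <| sum_nonneg fun y _ =>
        mul_nonneg (killedGreen_nonneg hp0 N x y) (killedKernel_pow_nonneg hp0 N x y)

lemma mul_killedGreen_diag_le (hp0 : ∀ z, 0 ≤ p z) (hp1 : HasSum p 1) (hD : ∀ y ∈ D, 0 < y)
    {a : ℤ} (ha : 0 < a) (N : ℕ) (x : D) : p a * killedGreen p D N x x ≤ 2 * x := by
  have hx : (0 : ℤ) < x := hD x x.2
  have hg : ∀ y ∉ D, Function.extend Subtype.val (killedGreen p D N x) 0 y = 0 := fun y hy =>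
    Function.extend_apply' _ _ _ fun ⟨z, hz⟩ => hy (hz ▸ z.2)
  have hexit : Function.extend Subtype.val (killedGreen p D N x) 0
      (x - ((x : ℤ).toNat : ℕ) * a) = 0 := by
    refine hg _ fun hmem => ?_
    have := hD _ hmem
    rw [Int.toNat_of_nonneg hx.le] at this
    nlinarith
  have hsq := mul_sq_le_dirichletForm hp0 hp1 hg ha.ne' hexit
  have hm : (((x : ℤ).toNat : ℕ) : ℝ) = (x : ℤ) := by
    exact_mod_cast Int.toNat_of_nonneg hx.le
  rw [Subtype.val_injective.extend_apply, hm] at hsq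
  have hE := mul_le_mul_of_nonneg_left (dirichletForm_killedGreen_le hp0 N x)
    (by positivity : (0 : ℝ) ≤ 2 * (x : ℤ))
  rcases (killedGreen_nonneg hp0 N x x).eq_or_lt with h0 | hpos
  · rw [← h0, mul_zero]
    positivity
  · nlinarith

lemma mul_sum_killedGreen_le (hp0 : ∀ z, 0 ≤ p z) (hp1 : HasSum p 1)
    (hsymm : ∀ z, p (-z) = p z) (hD : ∀ y ∈ D, 0 < y) {a : ℤ} (ha : 0 < a) (N : ℕ) (x : D) :
    p a * ∑ y, killedGreen p D N x y ≤ 2 * x * #D := by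
  have hmax : ∑ y, killedGreen p D N x y ≤ #D * killedGreen p D N x x := by
    calc ∑ y, killedGreen p D N x y ≤ ∑ _y : D, killedGreen p D N x x :=
          sum_le_sum fun y _ => (killedGreen_comm hsymm N x y).trans_le
            (killedGreen_le_diag hp0 hp1 N x y)
      _ = #D * killedGreen p D N x x := by simp
  calc p a * ∑ y, killedGreen p D N x y ≤ p a * (#D * killedGreen p D N x x) :=
        mul_le_mul_of_nonneg_left hmax (hp0 a)
    _ = #D * (p a * killedGreen p D N x x) := by ring
    _ ≤ #D * (2 * x) := mul_le_mul_of_nonneg_left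
        (mul_killedGreen_diag_le hp0 hp1 hD ha N x) (Nat.cast_nonneg _)
    _ = 2 * x * #D := by ring

end GreenBound

section Tail

noncomputable def tailSecondMoment (p : ℤ → ℝ) (L : ℤ) : ℝ :=
  ∑' z, {z : ℤ | L < 2 * z}.indicator (fun z : ℤ => (z : ℝ) ^ 2 * p z) z

variable {p : ℤ → ℝ}

lemma tailSecondMoment_nonneg (hp0 : ∀ z, 0 ≤ p z) (L : ℤ) : 0 ≤ tailSecondMoment p L :=
  tsum_nonneg fun z => Set.indicator_nonneg (fun z _ => mul_nonneg (sq_nonneg _) (hp0 z)) z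

lemma tendsto_tailSecondMoment (hp0 : ∀ z, 0 ≤ p z)
    (hmom : Summable fun z : ℤ => (z : ℝ) ^ 2 * p z) :
    Tendsto (tailSecondMoment p) atTop (nhds 0) := by
  have h := tendsto_tsum_of_dominated_convergence (𝓕 := atTop) (g := fun _ => (0 : ℝ))
    (f := fun L z => {z : ℤ | L < 2 * z}.indicator (fun z : ℤ => (z : ℝ) ^ 2 * p z) z) hmom
    (fun z => tendsto_const_nhds.congr' <| (eventually_ge_atTop (2 * z)).mono fun L hL =>
      (Set.indicator_of_notMem (by simp only [Set.mem_ofPred_eq]; omega) _).symm)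
    (Eventually.of_forall fun L z => by
      rw [Real.norm_eq_abs, abs_of_nonneg (Set.indicator_nonneg
        (fun z _ => mul_nonneg (sq_nonneg _) (hp0 z)) z)]
      exact Set.indicator_le_self' (fun z _ => mul_nonneg (sq_nonneg _) (hp0 z)) z)
  rw [tsum_zero] at h
  exact h

end Tail

section Walk

variable {Ω : Type*} {ξ : ℕ → Ω → ℤ}

lemma walk_zero (x : ℤ) (ω : Ω) : walk ξ x ω 0 = x := by simp [walk]

lemma walk_succ (x : ℤ) (ω : Ω) (n : ℕ) : walk ξ x ω (n + 1) = walk ξ x ω n + ξ n ω := by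
  simp [walk, sum_range_succ, add_assoc]

variable (ξ) in
abbrev firstStepsSigma (n : ℕ) : MeasurableSpace Ω :=
  ⨆ i ∈ Set.Iio n, MeasurableSpace.comap (ξ i) inferInstance

lemma measurable_walk_firstStepsSigma (x : ℤ) {m n : ℕ} (hmn : m ≤ n) :
    Measurable[firstStepsSigma ξ n] fun ω => walk ξ x ω m := by
  refine Measurable.const_add (Finset.measurable_sum _ fun i hi => ?_) x
  refine (comap_measurable (ξ i)).mono ?_ le_rfl
  exact le_iSup₂ (f := fun j (_ : j ∈ Set.Iio n) => MeasurableSpace.comap (ξ j) inferInstance)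
    i (by simp only [Set.mem_Iio]; simp only [mem_range] at hi; omega)

lemma measurableSet_walk_stays (D : Finset ℤ) (x y : ℤ) (n : ℕ) :
    MeasurableSet[firstStepsSigma ξ n]
      {ω | (∀ m ≤ n, walk ξ x ω m ∈ D) ∧ walk ξ x ω n = y} := by
  simp only [Set.ofPred_and, Set.ofPred_forall]
  exact (MeasurableSet.iInter fun m => MeasurableSet.iInter fun hm =>
    measurable_walk_firstStepsSigma x hm MeasurableSet.of_discrete).inter
    (measurable_walk_firstStepsSigma (ξ := ξ) x le_rfl (measurableSet_singleton y))

variable [MeasurableSpace Ω] {μ : Measure Ω}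

lemma firstStepsSigma_le (hmeas : ∀ i, Measurable (ξ i)) (n : ℕ) :
    firstStepsSigma ξ n ≤ ‹MeasurableSpace Ω› :=
  iSup₂_le fun i _ => (hmeas i).comap_le

lemma measure_inter_step_eq_mul (hmeas : ∀ i, Measurable (ξ i)) (hiid : iIndepFun ξ μ)
    {n : ℕ} {t : Set Ω} (ht : MeasurableSet[firstStepsSigma ξ n] t) (s : Set ℤ) :
    μ (t ∩ ξ n ⁻¹' s) = μ t * μ (ξ n ⁻¹' s) := by
  have hind := indep_iSup_of_disjoint (fun i => (hmeas i).comap_le)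
    ((iIndepFun_iff_iIndep _ _ _).1 hiid) (S := Set.Iio n) (T := {n}) (by simp)
  refine (Indep_iff _ _ _).1 hind t _ ht ?_
  exact le_iSup₂ (f := fun j (_ : j ∈ ({n} : Set ℕ)) =>
    MeasurableSpace.comap (ξ j) inferInstance) n rfl _ ⟨s, MeasurableSet.of_discrete, rfl⟩

lemma measure_step_singleton [IsFiniteMeasure μ] {p : ℤ → ℝ}
    (hstep : ∀ i z, (μ {ω | ξ i ω = z}).toReal = p z) (i : ℕ) (z : ℤ) :
    μ (ξ i ⁻¹' {z}) = ENNReal.ofReal (p z) := by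
  rw [← hstep i z, ENNReal.ofReal_toReal (measure_ne_top _ _)]
  rfl

lemma measure_walk_stays_eq [IsProbabilityMeasure μ] {p : ℤ → ℝ} {D : Finset ℤ}
    (hp0 : ∀ z, 0 ≤ p z) (hmeas : ∀ i, Measurable (ξ i)) (hiid : iIndepFun ξ μ)
    (hstep : ∀ i z, (μ {ω | ξ i ω = z}).toReal = p z) (x y : D) (n : ℕ) :
    μ {ω | (∀ m ≤ n, walk ξ x ω m ∈ D) ∧ walk ξ x ω n = y}
      = ENNReal.ofReal ((killedKernel p D ^ n) x y) := by
  induction n generalizing y with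
  | zero =>
    by_cases hxy : x = y
    · subst hxy
      simp [walk_zero]
    · have hxy' : (x : ℤ) ≠ y := fun h => hxy (Subtype.ext h)
      simp [walk_zero, hxy, hxy']
  | succ n ih =>
    have hsplit : {ω | (∀ m ≤ n + 1, walk ξ x ω m ∈ D) ∧ walk ξ x ω (n + 1) = y}
        = ⋃ z : D, {ω | (∀ m ≤ n, walk ξ x ω m ∈ D) ∧ walk ξ x ω n = z}
            ∩ ξ n ⁻¹' {(y : ℤ) - z} := by
      ext ω
      simp only [Set.mem_ofPred_eq, Set.mem_iUnion, Set.mem_inter_iff, Set.mem_preimage,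
        Set.mem_singleton_iff, walk_succ]
      constructor
      · rintro ⟨hstay, hy⟩
        exact ⟨⟨_, hstay n n.le_succ⟩, ⟨fun m hm => hstay m (hm.trans n.le_succ), rfl⟩,
          by simp only; omega⟩
      · rintro ⟨z, ⟨hstay, hz⟩, hjump⟩
        have hy : walk ξ x ω n + ξ n ω = y := by omega
        refine ⟨fun m hm => ?_, hy⟩
        rcases Nat.le_succ_iff.1 hm with hm | rfl
        · exact hstay m hm
        · rw [walk_succ, hy]
          exact y.2
    have hdisj : Pairwise fun z z' : D => Disjoint
        ({ω | (∀ m ≤ n, walk ξ x ω m ∈ D) ∧ walk ξ x ω n = z} ∩ ξ n ⁻¹' {(y : ℤ) - z})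
        ({ω | (∀ m ≤ n, walk ξ x ω m ∈ D) ∧ walk ξ x ω n = z'} ∩ ξ n ⁻¹' {(y : ℤ) - z'}) :=
      fun z z' hzz' => Set.disjoint_left.2 fun ω h h' =>
        hzz' (Subtype.ext (h.1.2.symm.trans h'.1.2))
    rw [hsplit, measure_iUnion hdisj fun z =>
      (firstStepsSigma_le hmeas n _ (measurableSet_walk_stays D x z n)).inter
        (hmeas n (measurableSet_singleton _)), tsum_fintype]
    simp only [fun z : D =>
        measure_inter_step_eq_mul hmeas hiid (measurableSet_walk_stays D x z n),
      ih, measure_step_singleton hstep, ← ENNReal.ofReal_mul (killedKernel_pow_nonneg hp0 _ _ _)]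
    rw [← ENNReal.ofReal_sum_of_nonneg fun z _ =>
      mul_nonneg (killedKernel_pow_nonneg hp0 _ _ _) (hp0 _), pow_succ, Matrix.mul_apply]
    rfl

lemma tsum_measure_walk_stays_le [IsProbabilityMeasure μ] {p : ℤ → ℝ} {D : Finset ℤ}
    (hp0 : ∀ z, 0 ≤ p z) (hp1 : HasSum p 1) (hsymm : ∀ z, p (-z) = p z)
    (hmeas : ∀ i, Measurable (ξ i)) (hiid : iIndepFun ξ μ)
    (hstep : ∀ i z, (μ {ω | ξ i ω = z}).toReal = p z) (hD : ∀ y ∈ D, 0 < y)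
    {a : ℤ} (ha : 0 < a) (hpa : 0 < p a) (x : D) :
    ∑' n, ∑ y : D, μ {ω | (∀ m ≤ n, walk ξ x ω m ∈ D) ∧ walk ξ x ω n = y}
      ≤ ENNReal.ofReal (2 * x * #D / p a) := by
  simp only [measure_walk_stays_eq hp0 hmeas hiid hstep]
  rw [ENNReal.tsum_eq_iSup_nat]
  refine iSup_le fun N => ?_
  have hgreen : ∑ n ∈ range N, ∑ y : D, ENNReal.ofReal ((killedKernel p D ^ n) x y)
      = ENNReal.ofReal (∑ y, killedGreen p D N x y) := by
    rw [ENNReal.ofReal_sum_of_nonneg fun y _ => killedGreen_nonneg hp0 N x y, sum_comm]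
    refine sum_congr rfl fun y _ => ?_
    rw [killedGreen, Matrix.sum_apply,
      ENNReal.ofReal_sum_of_nonneg fun n _ => killedKernel_pow_nonneg hp0 n x y]
  rw [hgreen]
  refine ENNReal.ofReal_le_ofReal ((le_div_iff₀ hpa).2 ?_)
  rw [mul_comm]
  exact mul_sum_killedGreen_le hp0 hp1 hsymm hD ha N x

lemma measure_step_tail_le [IsFiniteMeasure μ] {p : ℤ → ℝ} (hp0 : ∀ z, 0 ≤ p z)
    (hmom : Summable fun z : ℤ => (z : ℝ) ^ 2 * p z) (hmeas : ∀ i, Measurable (ξ i))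
    (hstep : ∀ i z, (μ {ω | ξ i ω = z}).toReal = p z) (i : ℕ) {L : ℤ} (hL : 0 < L) :
    μ (ξ i ⁻¹' {z | L < 2 * z}) ≤ ENNReal.ofReal (4 / L ^ 2 * tailSecondMoment p L) := by
  set s := {z : ℤ | L < 2 * z}
  have hpt : ∀ z : s, p z ≤ 4 / L ^ 2 * (((z : ℤ) : ℝ) ^ 2 * p z) := by
    intro z
    have hz : (L : ℝ) < 2 * (z : ℤ) := by exact_mod_cast z.2
    have hLR : (0 : ℝ) < L := by exact_mod_cast hL
    rw [← mul_assoc]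
    refine le_mul_of_one_le_left (hp0 z) ?_
    rw [div_mul_eq_mul_div, one_le_div (by positivity)]
    nlinarith
  rw [← tsum_measure_preimage_singleton s.to_countable fun z _ =>
    hmeas i (measurableSet_singleton z)]
  simp only [measure_step_singleton hstep]
  calc ∑' z : s, ENNReal.ofReal (p z)
      ≤ ∑' z : s, ENNReal.ofReal (4 / L ^ 2 * (((z : ℤ) : ℝ) ^ 2 * p z)) :=
        ENNReal.tsum_le_tsum fun z => ENNReal.ofReal_le_ofReal (hpt z)
    _ = ENNReal.ofReal (∑' z : s, 4 / L ^ 2 * (((z : ℤ) : ℝ) ^ 2 * p z)) :=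
        (ENNReal.ofReal_tsum_of_nonneg
          (f := fun z : s => 4 / L ^ 2 * (((z : ℤ) : ℝ) ^ 2 * p z))
          (fun z => (hp0 _).trans (hpt z)) ((hmom.subtype s).mul_left _)).symm
    _ = ENNReal.ofReal (4 / L ^ 2 * tailSecondMoment p L) := by
        rw [tsum_mul_left, tailSecondMoment, ← _root_.tsum_subtype]

lemma measure_overshoot_le (hmeas : ∀ i, Measurable (ξ i))
    (hiid : iIndepFun ξ μ) {L : ℤ} (x : Finset.Ioo 0 L) {c : ENNReal}
    (hc : ∀ n, μ (ξ n ⁻¹' {z | L < 2 * z}) ≤ c) :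
    μ {ω | ∃ n, 3 * L < 2 * walk ξ x ω n ∧ ∀ m < n, 0 < walk ξ x ω m ∧ walk ξ x ω m < L}
      ≤ (∑' n, ∑ y : Finset.Ioo 0 L,
          μ {ω | (∀ m ≤ n, walk ξ x ω m ∈ Finset.Ioo 0 L) ∧ walk ξ x ω n = y}) * c := by
  have hx := mem_Ioo.1 x.2
  -- a jump from inside `(0, L)` to beyond `3L/2` is larger than `L/2`
  have hsub :
      {ω | ∃ n, 3 * L < 2 * walk ξ x ω n ∧ ∀ m < n, 0 < walk ξ x ω m ∧ walk ξ x ω m < L}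
      ⊆ ⋃ n, ⋃ y : Finset.Ioo 0 L,
        {ω | (∀ m ≤ n, walk ξ x ω m ∈ Finset.Ioo 0 L) ∧ walk ξ x ω n = y}
          ∩ ξ n ⁻¹' {z | L < 2 * z} := by
    rintro ω ⟨n, hover, hstay⟩
    obtain ⟨n, rfl⟩ : ∃ k, n = k + 1 := Nat.exists_eq_succ_of_ne_zero fun h => by
      subst h
      rw [walk_zero] at hover
      omega
    have hn := hstay n n.lt_succ_self
    rw [walk_succ] at hover
    simp only [Set.mem_iUnion, Set.mem_inter_iff, Set.mem_preimage, Set.mem_ofPred_eq]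
    exact ⟨n, ⟨_, mem_Ioo.2 hn⟩,
      ⟨fun m hm => mem_Ioo.2 (hstay m (Nat.lt_succ_of_le hm)), rfl⟩, by omega⟩
  calc _ ≤ _ := measure_mono hsub
    _ ≤ ∑' n, ∑' y : Finset.Ioo 0 L,
          μ ({ω | (∀ m ≤ n, walk ξ x ω m ∈ Finset.Ioo 0 L) ∧ walk ξ x ω n = y}
            ∩ ξ n ⁻¹' {z | L < 2 * z}) :=
        (measure_iUnion_le _).trans (ENNReal.tsum_le_tsum fun n => measure_iUnion_le _)
    _ ≤ ∑' n, ∑ y : Finset.Ioo 0 L,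
          μ {ω | (∀ m ≤ n, walk ξ x ω m ∈ Finset.Ioo 0 L) ∧ walk ξ x ω n = y} * c := by
        refine ENNReal.tsum_le_tsum fun n => ?_
        rw [tsum_fintype]
        refine sum_le_sum fun y _ => ?_
        rw [measure_inter_step_eq_mul hmeas hiid (measurableSet_walk_stays _ _ _ n)]
        exact mul_le_mul' le_rfl (hc n)
    _ = _ := by simp only [← sum_mul, ENNReal.tsum_mul_right]

end Walk

section Overshoot

variable {Ω : Type*} [MeasurableSpace Ω] {μ : Measure Ω} [IsProbabilityMeasure μ]
  {ξ : ℕ → Ω → ℤ} {p : ℤ → ℝ}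

lemma overshoot_probability_le (hp0 : ∀ z, 0 ≤ p z) (hp1 : HasSum p 1)
    (hsymm : ∀ z, p (-z) = p z) (hmom : Summable fun z : ℤ => (z : ℝ) ^ 2 * p z)
    (hmeas : ∀ i, Measurable (ξ i)) (hiid : iIndepFun ξ μ)
    (hstep : ∀ i z, (μ {ω | ξ i ω = z}).toReal = p z) {a : ℤ} (ha : 0 < a) (hpa : 0 < p a)
    {x L : ℤ} (hx : 0 < x) (hxL : x < L) :
    (μ {ω | ∃ n, 3 * L < 2 * walk ξ x ω n ∧
        ∀ m < n, 0 < walk ξ x ω m ∧ walk ξ x ω m < L}).toReal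
      ≤ 8 * x * tailSecondMoment p L / (p a * L) := by
  have hL : 0 < L := hx.trans hxL
  have hLR : (0 : ℝ) < L := by exact_mod_cast hL
  have hxR : (0 : ℝ) < x := by exact_mod_cast hx
  have hT := tailSecondMoment_nonneg hp0 L
  have hcard : ((#(Finset.Ioo 0 L) : ℕ) : ℝ) ≤ L := by
    have h : ((L - 0 - 1).toNat : ℤ) ≤ L := by omega
    rw [Int.card_Ioo]
    exact_mod_cast h
  have hmeasure := (measure_overshoot_le hmeas hiid ⟨x, mem_Ioo.2 ⟨hx, hxL⟩⟩
    fun n => measure_step_tail_le hp0 hmom hmeas hstep n hL).trans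
    (mul_le_mul' (tsum_measure_walk_stays_le hp0 hp1 hsymm hmeas hiid hstep
      (fun y hy => (mem_Ioo.1 hy).1) ha hpa _) le_rfl)
  rw [← ENNReal.ofReal_mul (by positivity)] at hmeasure
  refine (ENNReal.toReal_le_of_le_ofReal (by positivity) hmeasure).trans ?_
  calc 2 * x * (#(Finset.Ioo 0 L) : ℕ) / p a * (4 / L ^ 2 * tailSecondMoment p L)
      = 8 * x * tailSecondMoment p L / (p a * L) * ((#(Finset.Ioo 0 L) : ℕ) / L) := by
        field_simp
        ring
    _ ≤ 8 * x * tailSecondMoment p L / (p a * L) :=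
        mul_le_of_le_one_right (by positivity) ((div_le_one hLR).2 hcard)

lemma two_pow_mul_overshoot_le (hp0 : ∀ z, 0 ≤ p z) (hp1 : HasSum p 1)
    (hsymm : ∀ z, p (-z) = p z) (hmom : Summable fun z : ℤ => (z : ℝ) ^ 2 * p z)
    (hmeas : ∀ i, Measurable (ξ i)) (hiid : iIndepFun ξ μ)
    (hstep : ∀ i z, (μ {ω | ξ i ω = z}).toReal = p z) {a : ℤ} (ha : 0 < a) (hpa : 0 < p a)
    {k r : ℕ} (hk : 0 < k) (hr : 0 < r) :
    (2 : ℝ) ^ r * (μ {ω | ∃ n, 3 * (k : ℤ) * 2 ^ r < 2 * walk ξ k ω n ∧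
        ∀ m < n, 0 < walk ξ k ω m ∧ walk ξ k ω m < (k : ℤ) * 2 ^ r}).toReal
      ≤ 8 * tailSecondMoment p (k * 2 ^ r) / p a := by
  have hkZ : (0 : ℤ) < k := by exact_mod_cast hk
  have hprob := overshoot_probability_le hp0 hp1 hsymm hmom hmeas hiid hstep ha hpa hkZ
    (lt_mul_of_one_lt_right hkZ (one_lt_pow₀ (by norm_num : (1 : ℤ) < 2) hr.ne'))
  rw [← mul_assoc] at hprob
  calc _ ≤ (2 : ℝ) ^ r
          * (8 * k * tailSecondMoment p (k * 2 ^ r) / (p a * ((k * 2 ^ r : ℤ) : ℝ))) :=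
        mul_le_mul_of_nonneg_left hprob (by positivity)
    _ = 8 * tailSecondMoment p (k * 2 ^ r) / p a := by
        push_cast
        field_simp

end Overshoot

lemma exists_pos_of_closure_eq_top {p : ℤ → ℝ} (hp0 : ∀ z, 0 ≤ p z)
    (hsymm : ∀ z, p (-z) = p z) (hirr : AddSubgroup.closure {z : ℤ | p z ≠ 0} = ⊤) :
    ∃ a, 0 < a ∧ 0 < p a := by
  by_contra! h
  have hsupp : {z : ℤ | p z ≠ 0} ⊆ {0} := by
    intro z hz
    by_contra hz0
    refine hz (le_antisymm ?_ (hp0 z))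
    rcases lt_or_gt_of_ne (Set.mem_singleton_iff.not.1 hz0) with hneg | hpos
    · rw [← hsymm]
      exact h _ (by omega)
    · exact h z hpos
  have h1 : (1 : ℤ) ∈ AddSubgroup.closure ({0} : Set ℤ) :=
    AddSubgroup.closure_mono hsupp (hirr ▸ AddSubgroup.mem_top 1)
  rw [AddSubgroup.closure_singleton_zero, AddSubgroup.mem_bot] at h1
  exact one_ne_zero h1

lemma finite_setOf_mul_two_pow_lt (M : ℤ) :
    {q : ℕ × ℕ | 0 < q.1 ∧ (q.1 : ℤ) * 2 ^ q.2 < M}.Finite := by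
  refine ((Set.finite_Iio M.toNat).prod (Set.finite_Iio M.toNat)).subset ?_
  rintro ⟨k, r⟩ ⟨hk, hkr⟩
  simp only at hk hkr
  have hr : (r : ℤ) < 2 ^ r := by exact_mod_cast Nat.lt_two_pow_self
  have hk' : (1 : ℤ) ≤ k := by exact_mod_cast hk
  have h2r : (1 : ℤ) ≤ 2 ^ r := one_le_pow₀ (by norm_num)
  have hk_le : (k : ℤ) ≤ k * 2 ^ r := le_mul_of_one_le_right (by omega) h2r
  have h2r_le : (2 : ℤ) ^ r ≤ k * 2 ^ r := le_mul_of_one_le_left (by positivity) hk'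
  simp only [Set.mem_prod, Set.mem_Iio]
  constructor <;> omega

/-- `2^r P^k(Z(τ_{I_{k,r}^c}) > 3k2^r/2) → 0` as `k2^r → ∞`: for every
`ε > 0` only finitely many pairs `(k,r)` violate the bound. -/
theorem stmt7
    {Ω : Type*} [MeasurableSpace Ω] (μ : Measure Ω) [IsProbabilityMeasure μ]
    (p : ℤ → ℝ) (hp0 : ∀ z, 0 ≤ p z) (hp1 : HasSum p 1)
    (hsymm : ∀ z, p (-z) = p z)
    (hirr : AddSubgroup.closure {z : ℤ | p z ≠ 0} = ⊤)
    (hmom : Summable fun z : ℤ => (z : ℝ) ^ 2 * p z)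
    (ξ : ℕ → Ω → ℤ) (hmeas : ∀ i, Measurable (ξ i))
    (hiid : iIndepFun ξ μ)
    (hstep : ∀ i z, (μ {ω | ξ i ω = z}).toReal = p z) :
    ∀ ε : ℝ, 0 < ε →
      {q : ℕ × ℕ | 0 < q.1 ∧ 0 < q.2 ∧
        ε ≤ (2 : ℝ) ^ q.2 *
          (μ {ω | ∃ n : ℕ, 3 * (q.1 : ℤ) * 2 ^ q.2 < 2 * walk ξ (q.1 : ℤ) ω n ∧
              ∀ m : ℕ, m < n → 0 < walk ξ (q.1 : ℤ) ω m ∧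
                walk ξ (q.1 : ℤ) ω m < (q.1 : ℤ) * 2 ^ q.2}).toReal}.Finite := by
  intro ε hε
  obtain ⟨a, ha, hpa⟩ := exists_pos_of_closure_eq_top hp0 hsymm hirr
  obtain ⟨M, hM⟩ := ((tendsto_tailSecondMoment hp0 hmom).eventually
    (gt_mem_nhds (by positivity : 0 < ε * p a / 8))).exists_forall_of_atTop
  refine (finite_setOf_mul_two_pow_lt M).subset ?_
  rintro ⟨k, r⟩ ⟨hk, hr, hε_le⟩
  simp only at hk hr hε_le
  refine ⟨hk, lt_of_not_ge fun hkr => ?_⟩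
  have hsmall : 8 * tailSecondMoment p (k * 2 ^ r) / p a < ε := by
    rw [div_lt_iff₀ hpa]
    linarith [hM _ hkr]
  linarith [two_pow_mul_overshoot_le hp0 hp1 hsymm hmom hmeas hiid hstep ha hpa hk hr]
end

section
/- Let Z be a symmetric irreducible random walk on ℤ whose step kernel has finite third absolute moment. Then sup over k ≥ 1 of E^k[|Z(τ_{(−∞,0]})|] (the expected overshoot below 0 starting from k) is finite. -/
open MeasureTheory ProbabilityTheory Finset Filter

open scoped Classical in
/-- The overshoot \`|Z(τ_{(−∞,0]})|\` of the walk started at \`x\` (and \`0\` if the walk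
never enters \`(−∞,0]\`). -/
noncomputable def overshoot {Ω : Type*} (ξ : ℕ → Ω → ℤ) (x : ℤ) (ω : Ω) : ℤ :=
  if h : ∃ n : ℕ, walk ξ x ω n ≤ 0 then |walk ξ x ω (Nat.find h)| else 0

/-!
Let `v y = E[(ξ - y)⁺]` (`excess`); by symmetry this is the mean overshoot below `0` of one step
from `y`, so the expected overshoot is `E^k[∑_{n<τ} v(Z n)]`. The ramp `y ↦ clamp(y, 0, n)` is
harmonic for the walk except at its two corners, which for `G y = ∑ₙ c n clamp(y, 0, n)`
(`rampSum`) gives `P G - G = ∑ₙ c n (v y - v |y - n|)` on `y ≥ 1`. Choosing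
`c n = θ v n + η [n = 1]` makes `P G + v ≤ G` on `y ≥ 1`, so `G(Z_{n∧τ}) + ∑_{m<n∧τ} v(Z m)` is a
supermartingale and the expected overshoot is at most `G k ≤ ∑ₙ (n + 1) c n`. This is finite
because `∑ₙ n v n ≲ E[(ξ⁺)³]`.
-/

open scoped ENNReal

namespace Overshoot

section Summation

lemma tsum_le_tsum_succ_mul (f : ℕ → ℝ≥0∞) : ∑' n, f n ≤ ∑' n : ℕ, ((n : ℝ≥0∞) + 1) * f n :=
  ENNReal.tsum_le_tsum fun _ => le_mul_of_one_le_left' le_add_self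

lemma exists_tsum_ite_le {f : ℕ → ℝ≥0∞} (hf : ∑' n, f n ≠ ∞) {ε : ℝ≥0∞} (hε : 0 < ε) :
    ∃ N, ∑' n, (if N ≤ n then f n else 0) ≤ ε := by
  obtain ⟨N, hN⟩ := ENNReal.tendsto_atTop_zero.1 (ENNReal.tendsto_sum_nat_add f hf) ε hε
  refine ⟨N, le_of_eq_of_le ?_ (hN N le_rfl)⟩
  rw [← (add_left_injective N).tsum_eq fun n hn => ?_]
  · simp
  · rw [Function.mem_support, ite_ne_right_iff] at hn
    exact ⟨n - N, by simp only; omega⟩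

lemma exists_ne_top_mul_le {ι : Type*} (s : Finset ι) {a b : ι → ℝ≥0∞}
    (ha : ∀ i ∈ s, a i ≠ ∞) (hb : ∀ i ∈ s, b i ≠ ∞) (hab : ∀ i ∈ s, a i ≠ 0 → b i ≠ 0) :
    ∃ η ≠ ∞, ∀ i ∈ s, a i ≤ η * b i := by
  classical
  refine ⟨∑ i ∈ s.filter (a · ≠ 0), a i / b i,
    ENNReal.sum_ne_top.2 fun i hi => ?_, fun i hi => ?_⟩
  · rw [mem_filter] at hi
    exact ENNReal.div_ne_top (ha i hi.1) (hab i hi.1 hi.2)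
  · rcases eq_or_ne (a i) 0 with h0 | h0
    · simp [h0]
    calc a i = a i / b i * b i := (ENNReal.div_mul_cancel (hab i hi h0) (hb i hi)).symm
      _ ≤ _ := by
        gcongr
        exact single_le_sum (f := fun i => a i / b i) (fun _ _ => zero_le)
          (mem_filter.2 ⟨hi, h0⟩)

lemma tsum_le_of_add_le {A D : ℕ → ℝ≥0∞} (h : ∀ n, A (n + 1) + D n ≤ A n) :
    ∑' n, D n ≤ A 0 := by
  have partial_le : ∀ N, ∑ n ∈ range N, D n + A N ≤ A 0 := by
    intro N
    induction N with
    | zero => simp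
    | succ N ih =>
      calc ∑ n ∈ range (N + 1), D n + A (N + 1)
          = ∑ n ∈ range N, D n + (A (N + 1) + D N) := by rw [sum_range_succ]; ring
        _ ≤ A 0 := le_trans (by gcongr; exact h N) ih
  exact ENNReal.tsum_le_of_sum_range_le fun N => le_trans le_self_add (partial_le N)

end Summation

section Excess

variable (q : ℤ → ℝ≥0∞)

noncomputable def excess (d : ℤ) : ℝ≥0∞ :=
  ∑' z, q z * (z - d).toNat

lemma excess_antitone : Antitone (excess q) := fun _ _ _ =>
  ENNReal.tsum_le_tsum fun _ => by gcongr; omega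

variable {q}

lemma excess_lt_excess_sub_one {d : ℤ} (hfin : excess q d ≠ ∞) (hpos : excess q d ≠ 0) :
    excess q d < excess q (d - 1) := by
  obtain ⟨z, hz⟩ : ∃ z, q z * (z - d).toNat ≠ 0 := by
    by_contra! h
    exact hpos (ENNReal.tsum_eq_zero.2 h)
  have hdz : d < z := by
    by_contra! h
    simp [show (z - d).toNat = 0 by omega] at hz
  calc excess q d < excess q d + q z := ENNReal.lt_add_right hfin (left_ne_zero_of_mul hz)
    _ = ∑' w, (q w * (w - d).toNat + if w = z then q z else 0) := by
      rw [ENNReal.tsum_add, tsum_ite_eq, excess]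
    _ ≤ excess q (d - 1) := ENNReal.tsum_le_tsum fun w => by
      split_ifs with h
      · subst h
        rw [← mul_add_one]
        gcongr
        exact_mod_cast (show (w - d).toNat + 1 ≤ (w - (d - 1)).toNat by omega)
      · rw [add_zero]
        gcongr
        omega

lemma tsum_succ_mul_toNat_sub_le_pow_three (z : ℤ) :
    ∑' n : ℕ, ((n : ℝ≥0∞) + 1) * (z - n).toNat ≤ (z.toNat : ℝ≥0∞) ^ 3 := by
  rw [tsum_eq_sum (s := range z.toNat) fun n hn => by
    simp [show (z - n).toNat = 0 by simp at hn; omega]]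
  calc ∑ n ∈ range z.toNat, ((n : ℝ≥0∞) + 1) * (z - n).toNat
      ≤ (range z.toNat).card • (z.toNat : ℝ≥0∞) ^ 2 := by
        refine sum_le_card_nsmul _ _ _ fun n hn => ?_
        rw [mem_range] at hn
        rw [sq]
        exact_mod_cast Nat.mul_le_mul (by omega) (by omega)
    _ = (z.toNat : ℝ≥0∞) ^ 3 := by rw [card_range, nsmul_eq_mul]; ring

lemma tsum_succ_mul_excess_le :
    ∑' n : ℕ, ((n : ℝ≥0∞) + 1) * excess q n ≤ ∑' z, q z * (z.toNat : ℝ≥0∞) ^ 3 :=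
  calc ∑' n : ℕ, ((n : ℝ≥0∞) + 1) * excess q n
      = ∑' z, q z * ∑' n : ℕ, ((n : ℝ≥0∞) + 1) * (z - n).toNat := by
        simp_rw [excess, ← ENNReal.tsum_mul_left]
        rw [ENNReal.tsum_comm]
        exact tsum_congr fun z => tsum_congr fun n => by ring
    _ ≤ ∑' z, q z * (z.toNat : ℝ≥0∞) ^ 3 :=
        ENNReal.tsum_le_tsum fun z => by gcongr; exact tsum_succ_mul_toNat_sub_le_pow_three z

lemma tsum_mul_toNat_pow_three_ne_top (hq : ∀ z, q z ≠ ∞)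
    (hmom : Summable fun z : ℤ => |(z : ℝ)| ^ 3 * (q z).toReal) :
    ∑' z, q z * (z.toNat : ℝ≥0∞) ^ 3 ≠ ∞ := by
  refine ne_top_of_le_ne_top ENNReal.ofReal_ne_top (le_of_le_of_eq (ENNReal.tsum_le_tsum fun z => ?_)
    (ENNReal.ofReal_tsum_of_nonneg (fun z => by positivity) hmom).symm)
  rw [ENNReal.ofReal_mul (by positivity), ENNReal.ofReal_toReal (hq z), mul_comm]
  gcongr
  rw [← ENNReal.ofReal_natCast, ← ENNReal.ofReal_pow (by positivity)]
  gcongr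
  rw [← Int.cast_abs, ← Int.cast_natCast]
  exact_mod_cast (show (z.toNat : ℤ) ≤ |z| by simp only [abs_eq_max_neg]; omega)

lemma two_mul_tsum_eq_tsum_add_neg (hsymm : ∀ z, q (-z) = q z) (f : ℤ → ℝ≥0∞) :
    2 * ∑' z, q z * f z = ∑' z, q z * (f z + f (-z)) := by
  have hneg : ∑' z, q z * f z = ∑' z, q z * f (-z) := by
    rw [← (Equiv.neg ℤ).tsum_eq]
    simp [hsymm]
  rw [two_mul]
  nth_rw 2 [hneg]
  simp_rw [mul_add, ENNReal.tsum_add]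

lemma two_mul_excess (hsymm : ∀ z, q (-z) = q z) {d : ℤ} (hd : 0 ≤ d) :
    2 * excess q d = ∑' z, q z * (|z| - d).toNat := by
  rw [excess, two_mul_tsum_eq_tsum_add_neg hsymm]
  refine tsum_congr fun z => ?_
  norm_cast
  congr 2
  simp only [abs_eq_max_neg]
  omega

lemma tsum_mul_toNat_neg_add (hsymm : ∀ z, q (-z) = q z) (y : ℤ) :
    ∑' z, q z * (-(y + z)).toNat = excess q y := by
  rw [← (Equiv.neg ℤ).tsum_eq]
  simp only [Equiv.neg_apply, hsymm, excess]
  exact tsum_congr fun z => by congr 3; ring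

end Excess

section Weights

variable {v : ℤ → ℝ≥0∞}

noncomputable def tailFrom (v : ℤ → ℝ≥0∞) (x : ℕ) : ℝ≥0∞ :=
  ∑' n : ℕ, if x ≤ n then v n else 0

lemma tailFrom_le_tsum (v : ℤ → ℝ≥0∞) (x : ℕ) : tailFrom v x ≤ ∑' n : ℕ, v n :=
  ENNReal.tsum_le_tsum fun n => by split_ifs <;> simp

lemma tsum_mul_add_le_tsum_mul_abs (hv : Antitone v) (x : ℕ) :
    (∑' n : ℕ, v n) * v x + v 0 * v x ≤ ∑' n : ℕ, v n * v |(x : ℤ) - n| + tailFrom v x * v x := by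
  have termwise : ∀ n : ℕ, v n * v x + (if n = x then v 0 * v x else 0)
      ≤ v n * v |(x : ℤ) - n| + (if x ≤ n then v n else 0) * v x := by
    intro n
    rcases lt_trichotomy n x with h | rfl | h
    · rw [if_neg h.ne, if_neg (by omega), add_zero, zero_mul, add_zero]
      gcongr
      exact hv (by rw [abs_of_pos (by omega)]; omega)
    · simp [mul_comm, add_comm]
    · rw [if_neg h.ne', if_pos h.le, add_zero]
      exact le_add_self
  calc (∑' n : ℕ, v n) * v x + v 0 * v x
      = ∑' n : ℕ, (v n * v x + if n = x then v 0 * v x else 0) := by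
        rw [ENNReal.tsum_add, ENNReal.tsum_mul_right, tsum_ite_eq]
    _ ≤ ∑' n : ℕ, (v n * v |(x : ℤ) - n| + (if x ≤ n then v n else 0) * v x) :=
        ENNReal.tsum_le_tsum termwise
    _ = _ := by rw [ENNReal.tsum_add, ENNReal.tsum_mul_right, tailFrom]

noncomputable def weight (v : ℤ → ℝ≥0∞) (θ η : ℝ≥0∞) (n : ℕ) : ℝ≥0∞ :=
  θ * v n + if n = 1 then η else 0

lemma tsum_succ_mul_weight (v : ℤ → ℝ≥0∞) (θ η : ℝ≥0∞) :
    ∑' n : ℕ, ((n : ℝ≥0∞) + 1) * weight v θ η n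
      = θ * ∑' n : ℕ, ((n : ℝ≥0∞) + 1) * v n + 2 * η := by
  simp only [weight, mul_add, mul_left_comm _ θ, mul_ite, mul_zero]
  rw [ENNReal.tsum_add, ENNReal.tsum_mul_left, tsum_ite_eq]
  norm_num

lemma one_add_tsum_weight_mul_le (hv : Antitone v) {θ η : ℝ≥0∞} {x : ℕ} (hx : 1 ≤ x)
    (hfin : θ * v 0 * v x ≠ ∞)
    (hcore : v x + θ * tailFrom v x * v x + η * v x ≤ θ * v 0 * v x + η * v (x - 1)) :
    (1 + ∑' n, weight v θ η n) * v x ≤ ∑' n, weight v θ η n * v |(x : ℤ) - n| := by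
  have hsum : ∑' n, weight v θ η n = θ * ∑' n : ℕ, v n + η := by
    simp only [weight]
    rw [ENNReal.tsum_add, ENNReal.tsum_mul_left, tsum_ite_eq]
  have hsum_mul : ∑' n, weight v θ η n * v |(x : ℤ) - n|
      = θ * ∑' n : ℕ, v n * v |(x : ℤ) - n| + η * v (x - 1) := by
    simp only [weight, add_mul, ite_mul, zero_mul, mul_assoc]
    rw [ENNReal.tsum_add, ENNReal.tsum_mul_left, tsum_ite_eq, Nat.cast_one,
      abs_of_nonneg (by omega : (0 : ℤ) ≤ x - 1)]
  rw [hsum, hsum_mul]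
  refine (ENNReal.add_le_add_iff_right hfin).1 ?_
  calc (1 + (θ * ∑' n : ℕ, v n + η)) * v x + θ * v 0 * v x
      = v x + θ * ((∑' n : ℕ, v n) * v x + v 0 * v x) + η * v x := by ring
    _ ≤ v x + θ * (∑' n : ℕ, v n * v |(x : ℤ) - n| + tailFrom v x * v x) + η * v x := by
        gcongr v x + θ * ?_ + η * v x
        exact tsum_mul_add_le_tsum_mul_abs hv x
    _ = θ * ∑' n : ℕ, v n * v |(x : ℤ) - n| + (v x + θ * tailFrom v x * v x + η * v x) := by
        ring
    _ ≤ θ * ∑' n : ℕ, v n * v |(x : ℤ) - n| + (θ * v 0 * v x + η * v (x - 1)) := by gcongr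
    _ = _ := by ring

theorem exists_weights (hv : Antitone v) (hmom : ∑' n : ℕ, ((n : ℝ≥0∞) + 1) * v n ≠ ∞)
    (hlt : ∀ x : ℕ, 1 ≤ x → v x ≠ 0 → v x < v (x - 1)) :
    ∃ c : ℕ → ℝ≥0∞, ∑' n : ℕ, ((n : ℝ≥0∞) + 1) * c n ≠ ∞ ∧
      ∀ x : ℕ, 1 ≤ x → (1 + ∑' n, c n) * v x ≤ ∑' n, c n * v |(x : ℤ) - n| := by
  have hV : ∑' n : ℕ, v n ≠ ∞ := ne_top_of_le_ne_top hmom (tsum_le_tsum_succ_mul _)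
  have hv0 : v 0 ≠ ∞ :=
    ne_top_of_le_ne_top hV (by simpa using ENNReal.le_tsum (f := fun n : ℕ => v n) 0)
  have hvx : ∀ x : ℕ, v x ≠ ∞ := fun x => ne_top_of_le_ne_top hv0 (hv (by positivity))
  rcases eq_or_ne (v 0) 0 with h0 | h0
  · refine ⟨0, by simp, fun x _ => ?_⟩
    simp [le_antisymm (h0 ▸ hv (Int.natCast_nonneg x)) zero_le]
  -- `θ = 2 / v 0` lets the ramp at `n = x` pay for `v x` once the tail of `v` from `x` on is
  -- below `v 0 / 2`; the finitely many smaller `x` are paid for by the ramp at `1`, since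
  -- `v x < v (x - 1)`.
  set θ := 2 / v 0
  have hθv0 : θ * v 0 = 2 := ENNReal.div_mul_cancel h0 hv0
  obtain ⟨N, hN⟩ := exists_tsum_ite_le hV (ENNReal.half_pos h0)
  obtain ⟨η, hη, hηle⟩ := exists_ne_top_mul_le (Ico 1 N)
    (a := fun x : ℕ => (1 + θ * ∑' n : ℕ, v n) * v x) (b := fun x : ℕ => v (x - 1) - v x)
    (fun x _ => by have := hvx x; finiteness)
    (fun x hx => ne_top_of_le_ne_top (ne_top_of_le_ne_top hv0 (hv (by simp at hx; omega)))
      tsub_le_self)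
    (fun x hx hax => (tsub_pos_of_lt (hlt x (mem_Ico.1 hx).1 (right_ne_zero_of_mul hax))).ne')
  refine ⟨weight v θ η, by rw [tsum_succ_mul_weight]; finiteness,
    fun x hx => one_add_tsum_weight_mul_le hv hx (by have := hvx x; finiteness) ?_⟩
  rcases le_or_gt N x with hfar | hnear
  · have htail : θ * tailFrom v x ≤ 1 :=
      calc θ * tailFrom v x ≤ θ * (v 0 / 2) := by
            gcongr
            refine le_trans (ENNReal.tsum_le_tsum fun n => ?_) hN
            split_ifs <;> first | rfl | exact zero_le | omega
        _ = 1 := by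
          rw [← mul_div_assoc, hθv0, ENNReal.div_self two_ne_zero ENNReal.ofNat_ne_top]
    calc v x + θ * tailFrom v x * v x + η * v x ≤ v x + 1 * v x + η * v (x - 1) := by
          gcongr
          exact hv (by omega)
      _ = θ * v 0 * v x + η * v (x - 1) := by rw [hθv0]; ring
  · calc v x + θ * tailFrom v x * v x + η * v x ≤ (1 + θ * ∑' n : ℕ, v n) * v x + η * v x := by
          rw [add_mul, one_mul]
          gcongr
          exact tailFrom_le_tsum v x
      _ ≤ η * (v (x - 1) - v x) + η * v x := by
          gcongr ?_ + _
          exact hηle x (mem_Ico.2 ⟨hx, hnear⟩)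
      _ = η * v (x - 1) := by rw [← mul_add, tsub_add_cancel_of_le (hv (by omega))]
      _ ≤ _ := le_add_self

end Weights

section Ramps

variable {q : ℤ → ℝ≥0∞}

noncomputable def rampSum (c : ℕ → ℝ≥0∞) (y : ℤ) : ℝ≥0∞ :=
  ∑' n : ℕ, c n * (min y n).toNat

lemma rampSum_le (c : ℕ → ℝ≥0∞) (y : ℤ) : rampSum c y ≤ ∑' n : ℕ, ((n : ℝ≥0∞) + 1) * c n :=
  ENNReal.tsum_le_tsum fun n => by
    rw [mul_comm]
    gcongr
    exact_mod_cast (show (min y n).toNat ≤ n + 1 by omega)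

lemma tsum_mul_ramp_add_excess (hsymm : ∀ z, q (-z) = q z) (hq1 : ∑' z, q z = 1) (x n : ℕ) :
    ∑' z, q z * (min (x + z) n).toNat + excess q |(x : ℤ) - n|
      = (min (x : ℤ) n).toNat + excess q x := by
  refine (ENNReal.mul_right_inj two_ne_zero ENNReal.ofNat_ne_top).1 ?_
  rw [mul_add, mul_add, two_mul_tsum_eq_tsum_add_neg hsymm, two_mul_excess hsymm (abs_nonneg _),
    two_mul_excess hsymm (by positivity), ← ENNReal.tsum_add]
  calc ∑' z, (q z * ((min (x + z) n).toNat + (min (x + -z) n).toNat)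
          + q z * (|z| - |(x : ℤ) - n|).toNat)
      = ∑' z, q z * (2 * (min (x : ℤ) n).toNat + (|z| - x).toNat) := by
        refine tsum_congr fun z => ?_
        rw [← mul_add]
        congr 1
        have : (min (x + z) n).toNat + (min (x + -z) n).toNat + (|z| - |(x : ℤ) - n|).toNat
            = 2 * (min (x : ℤ) n).toNat + (|z| - x).toNat := by
          simp only [abs_eq_max_neg]
          omega
        exact_mod_cast this
    _ = 2 * (min (x : ℤ) n).toNat + ∑' z, q z * (|z| - x).toNat := by
        simp_rw [mul_add]
        rw [ENNReal.tsum_add, ENNReal.tsum_mul_right, hq1, one_mul]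

lemma tsum_mul_rampSum_add_le (hsymm : ∀ z, q (-z) = q z) (hq1 : ∑' z, q z = 1)
    {c : ℕ → ℝ≥0∞} {x : ℕ} (hfin : (∑' n, c n) * excess q x ≠ ∞)
    (hc : (1 + ∑' n, c n) * excess q x ≤ ∑' n, c n * excess q |(x : ℤ) - n|) :
    ∑' z, q z * rampSum c (x + z) + excess q x ≤ rampSum c x := by
  have hdrift : ∑' z, q z * rampSum c (x + z) + ∑' n, c n * excess q |(x : ℤ) - n|
      = rampSum c x + (∑' n, c n) * excess q x := by
    simp_rw [rampSum, ← ENNReal.tsum_mul_left, ← ENNReal.tsum_mul_right]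
    rw [ENNReal.tsum_comm, ← ENNReal.tsum_add, ← ENNReal.tsum_add]
    refine tsum_congr fun n => ?_
    rw [← mul_add (c n) _ (excess q x), ← tsum_mul_ramp_add_excess hsymm hq1 x n, mul_add,
      ← ENNReal.tsum_mul_left]
    congr 1
    exact tsum_congr fun z => by ring
  refine (ENNReal.add_le_add_iff_right hfin).1 ?_
  calc ∑' z, q z * rampSum c (x + z) + excess q x + (∑' n, c n) * excess q x
      = ∑' z, q z * rampSum c (x + z) + (1 + ∑' n, c n) * excess q x := by ring
    _ ≤ ∑' z, q z * rampSum c (x + z) + ∑' n, c n * excess q |(x : ℤ) - n| := by gcongr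
    _ = rampSum c x + (∑' n, c n) * excess q x := hdrift

end Ramps

section StoppedWalk

def stoppedStep (y z : ℤ) : ℤ :=
  if 0 < y then y + z else y

def overshootStep (y z : ℤ) : ℝ≥0∞ :=
  if 0 < y then (-(y + z)).toNat else 0

lemma tsum_mul_stoppedStep_add_overshootStep_le {q : ℤ → ℝ≥0∞} (hsymm : ∀ z, q (-z) = q z)
    (hq1 : ∑' z, q z = 1) {G : ℤ → ℝ≥0∞}
    (hG : ∀ x : ℕ, 1 ≤ x → ∑' z, q z * G (x + z) + excess q x ≤ G x) (y : ℤ) :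
    ∑' z, q z * (G (stoppedStep y z) + overshootStep y z) ≤ G y := by
  unfold stoppedStep overshootStep
  split_ifs with hy
  · lift y to ℕ using hy.le
    simp_rw [mul_add]
    rw [ENNReal.tsum_add, tsum_mul_toNat_neg_add hsymm]
    exact hG y (by omega)
  · simp [ENNReal.tsum_mul_right, hq1]

variable {Ω : Type*}

lemma walk_succ (ξ : ℕ → Ω → ℤ) (x : ℤ) (ω : Ω) (n : ℕ) :
    walk ξ x ω (n + 1) = walk ξ x ω n + ξ n ω := by
  rw [walk, walk, sum_range_succ, add_assoc]

def stoppedWalk (ξ : ℕ → Ω → ℤ) (x : ℤ) (ω : Ω) : ℕ → ℤ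
  | 0 => x
  | n + 1 => stoppedStep (stoppedWalk ξ x ω n) (ξ n ω)

lemma stoppedWalk_eq_walk {ξ : ℕ → Ω → ℤ} {x : ℤ} {ω : Ω} {n : ℕ}
    (h : ∀ m < n, 0 < walk ξ x ω m) : stoppedWalk ξ x ω n = walk ξ x ω n := by
  induction n with
  | zero => simp [stoppedWalk, walk]
  | succ n ih =>
    rw [stoppedWalk, ih fun m hm => h m (by omega), stoppedStep, if_pos (h n (by omega)),
      walk_succ]

lemma overshoot_nonneg (ξ : ℕ → Ω → ℤ) (x : ℤ) (ω : Ω) : 0 ≤ overshoot ξ x ω := by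
  unfold overshoot
  split_ifs
  exacts [abs_nonneg _, le_rfl]

lemma ofReal_overshoot_le_tsum (ξ : ℕ → Ω → ℤ) {x : ℤ} (hx : 0 < x) (ω : Ω) :
    ENNReal.ofReal (overshoot ξ x ω) ≤ ∑' n, overshootStep (stoppedWalk ξ x ω n) (ξ n ω) := by
  classical
  unfold overshoot
  split_ifs with h
  · obtain ⟨n, hn⟩ : ∃ n, Nat.find h = n + 1 :=
      Nat.exists_eq_succ_of_ne_zero fun h0 => by
        have := Nat.find_spec h
        rw [h0] at this
        simp [walk] at this
        omega
    have hpos : ∀ m < n + 1, 0 < walk ξ x ω m := fun m hm =>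
      not_le.1 (Nat.find_min h (hn ▸ hm))
    have hlast : walk ξ x ω n + ξ n ω ≤ 0 := walk_succ ξ x ω n ▸ hn ▸ Nat.find_spec h
    refine le_trans (le_of_eq ?_) (ENNReal.le_tsum n)
    rw [hn, overshootStep, stoppedWalk_eq_walk fun m hm => hpos m (by omega),
      if_pos (hpos n (by omega)), walk_succ, abs_of_nonpos hlast, ← ENNReal.ofReal_natCast]
    congr 1
    exact_mod_cast (Int.toNat_of_nonneg (by omega)).symm
  · simp

lemma measurable_stoppedWalk_past {ξ : ℕ → Ω → ℤ} (x : ℤ) (n : ℕ) :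
    Measurable[⨆ i ∈ Set.Iio n, MeasurableSpace.comap (ξ i) inferInstance]
      fun ω => stoppedWalk ξ x ω n := by
  induction n with
  | zero => exact measurable_const
  | succ n ih =>
    have hle : (⨆ i ∈ Set.Iio n, MeasurableSpace.comap (ξ i) inferInstance)
        ≤ ⨆ i ∈ Set.Iio (n + 1), MeasurableSpace.comap (ξ i) inferInstance :=
      biSup_mono fun i hi => Set.Iio_subset_Iio n.le_succ hi
    have hξ : Measurable[⨆ i ∈ Set.Iio (n + 1), MeasurableSpace.comap (ξ i) inferInstance] (ξ n) :=
      Measurable.of_comap_le (le_iSup₂ (f := fun i (_ : i ∈ Set.Iio (n + 1)) =>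
        MeasurableSpace.comap (ξ i) inferInstance) n (by simp))
    exact (measurable_of_countable (Function.uncurry stoppedStep)).comp
      ((ih.mono hle le_rfl).prodMk hξ)

end StoppedWalk

section Independence

variable {Ω : Type*} [MeasurableSpace Ω] {μ : Measure Ω}

lemma lintegral_comp_eq_lintegral_tsum_of_indepFun {α β : Type*} [MeasurableSpace α]
    [Countable α] [MeasurableSingletonClass α] [MeasurableSpace β] [Countable β]
    [MeasurableSingletonClass β] [IsFiniteMeasure μ] {X : Ω → α} {Y : Ω → β}
    (hX : Measurable X) (hY : Measurable Y) (hXY : IndepFun X Y μ) (F : α → β → ℝ≥0∞) :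
    ∫⁻ ω, F (X ω) (Y ω) ∂μ = ∫⁻ ω, ∑' b, μ (Y ⁻¹' {b}) * F (X ω) b ∂μ :=
  calc ∫⁻ ω, F (X ω) (Y ω) ∂μ = ∫⁻ p, F p.1 p.2 ∂(μ.map fun ω => (X ω, Y ω)) :=
        (lintegral_map (f := fun p : α × β => F p.1 p.2) (measurable_of_countable _)
          (hX.prodMk hY)).symm
    _ = ∫⁻ a, ∫⁻ b, F a b ∂(μ.map Y) ∂(μ.map X) := by
        rw [(indepFun_iff_map_prod_eq_prod_map_map hX.aemeasurable hY.aemeasurable).1 hXY,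
          lintegral_prod _ (measurable_of_countable _).aemeasurable]
    _ = ∫⁻ ω, ∑' b, μ (Y ⁻¹' {b}) * F (X ω) b ∂μ := by
        rw [lintegral_map (measurable_of_countable _) hX]
        refine lintegral_congr fun ω => ?_
        rw [lintegral_countable']
        exact tsum_congr fun b => by
          rw [Measure.map_apply hY (measurableSet_singleton b), mul_comm]

lemma tsum_measure_preimage_singleton_eq_one {β : Type*} [MeasurableSpace β] [Countable β]
    [MeasurableSingletonClass β] [IsProbabilityMeasure μ] {f : Ω → β} (hf : Measurable f) :
    ∑' b, μ (f ⁻¹' {b}) = 1 := by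
  rw [← tsum_univ, tsum_measure_preimage_singleton Set.countable_univ
    fun b _ => hf (measurableSet_singleton b), Set.preimage_univ, measure_univ]

lemma integral_le_toReal_lintegral_ofReal {f : Ω → ℝ} (hf : ∀ ω, 0 ≤ f ω) :
    ∫ ω, f ω ∂μ ≤ (∫⁻ ω, ENNReal.ofReal (f ω) ∂μ).toReal :=
  calc ∫ ω, f ω ∂μ ≤ ‖∫ ω, f ω ∂μ‖ := Real.le_norm_self _
    _ ≤ (∫⁻ ω, ENNReal.ofReal ‖f ω‖ ∂μ).toReal := norm_integral_le_lintegral_norm f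
    _ = _ := by simp_rw [Real.norm_of_nonneg (hf _)]

variable {ξ : ℕ → Ω → ℤ}

lemma measurable_stoppedWalk (hmeas : ∀ i, Measurable (ξ i)) (x : ℤ) (n : ℕ) :
    Measurable fun ω => stoppedWalk ξ x ω n :=
  (measurable_stoppedWalk_past x n).mono (iSup₂_le fun i _ => (hmeas i).comap_le) le_rfl

lemma indepFun_stoppedWalk (hmeas : ∀ i, Measurable (ξ i)) (hiid : iIndepFun ξ μ) (x : ℤ)
    (n : ℕ) : IndepFun (fun ω => stoppedWalk ξ x ω n) (ξ n) μ := by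
  rw [IndepFun_iff_Indep]
  have := indep_iSup_of_disjoint (fun i => (hmeas i).comap_le) hiid
    (S := Set.Iio n) (T := {n}) (by simp)
  rw [_root_.iSup_singleton] at this
  exact indep_of_indep_of_le_left this (measurable_stoppedWalk_past x n).comap_le

lemma tsum_lintegral_overshootStep_le [IsProbabilityMeasure μ] (hmeas : ∀ i, Measurable (ξ i))
    (hiid : iIndepFun ξ μ) {q : ℤ → ℝ≥0∞} (hq : ∀ i z, μ (ξ i ⁻¹' {z}) = q z)
    {G : ℤ → ℝ≥0∞} (hG : ∀ y, ∑' z, q z * (G (stoppedStep y z) + overshootStep y z) ≤ G y)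
    (x : ℤ) :
    ∑' n, ∫⁻ ω, overshootStep (stoppedWalk ξ x ω n) (ξ n ω) ∂μ ≤ G x := by
  have hsuper : ∀ n, ∫⁻ ω, G (stoppedWalk ξ x ω (n + 1)) ∂μ
      + ∫⁻ ω, overshootStep (stoppedWalk ξ x ω n) (ξ n ω) ∂μ
      ≤ ∫⁻ ω, G (stoppedWalk ξ x ω n) ∂μ := by
    intro n
    have hG_meas : Measurable fun ω => G (stoppedWalk ξ x ω (n + 1)) :=
      (measurable_of_countable G).comp (measurable_stoppedWalk hmeas x _)
    rw [← lintegral_add_left hG_meas]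
    refine (lintegral_comp_eq_lintegral_tsum_of_indepFun (measurable_stoppedWalk hmeas x n)
      (hmeas n) (indepFun_stoppedWalk hmeas hiid x n)
      fun y z => G (stoppedStep y z) + overshootStep y z).trans_le ?_
    simp_rw [hq n]
    exact lintegral_mono fun ω => hG _
  simpa [stoppedWalk] using tsum_le_of_add_le hsuper

lemma lintegral_ofReal_overshoot_le [IsProbabilityMeasure μ] (hmeas : ∀ i, Measurable (ξ i))
    (hiid : iIndepFun ξ μ) {q : ℤ → ℝ≥0∞} (hq : ∀ i z, μ (ξ i ⁻¹' {z}) = q z)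
    {G : ℤ → ℝ≥0∞} (hG : ∀ y, ∑' z, q z * (G (stoppedStep y z) + overshootStep y z) ≤ G y)
    {x : ℤ} (hx : 0 < x) :
    ∫⁻ ω, ENNReal.ofReal (overshoot ξ x ω) ∂μ ≤ G x :=
  calc ∫⁻ ω, ENNReal.ofReal (overshoot ξ x ω) ∂μ
      ≤ ∫⁻ ω, ∑' n, overshootStep (stoppedWalk ξ x ω n) (ξ n ω) ∂μ :=
        lintegral_mono (ofReal_overshoot_le_tsum ξ hx)
    _ = ∑' n, ∫⁻ ω, overshootStep (stoppedWalk ξ x ω n) (ξ n ω) ∂μ :=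
        lintegral_tsum fun n => ((measurable_of_countable (Function.uncurry overshootStep)).comp
          ((measurable_stoppedWalk hmeas x n).prodMk (hmeas n))).aemeasurable
    _ ≤ G x := tsum_lintegral_overshootStep_le hmeas hiid hq hG x

end Independence

end Overshoot

open Overshoot in
theorem stmt11_general
    {Ω : Type*} [MeasurableSpace Ω] (μ : Measure Ω) [IsProbabilityMeasure μ]
    (p : ℤ → ℝ)
    (hsymm : ∀ z, p (-z) = p z)
    (ξ : ℕ → Ω → ℤ) (hmeas : ∀ i, Measurable (ξ i))
    (hiid : iIndepFun ξ μ)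
    (hstep : ∀ i z, (μ {ω | ξ i ω = z}).toReal = p z)
    (hmom3 : Summable fun z : ℤ => |(z : ℝ)| ^ 3 * p z) :
    ∃ C : ℝ, ∀ k : ℕ, 1 ≤ k →
      (∫ ω, ((overshoot ξ (k : ℤ) ω : ℤ) : ℝ) ∂μ) ≤ C := by
  set q : ℤ → ℝ≥0∞ := fun z => μ (ξ 0 ⁻¹' {z})
  have hp : ∀ i z, (μ (ξ i ⁻¹' {z})).toReal = p z := hstep
  have hq : ∀ i z, μ (ξ i ⁻¹' {z}) = q z := fun i z =>
    (ENNReal.toReal_eq_toReal_iff' (measure_ne_top _ _) (measure_ne_top _ _)).1 (by rw [hp, hp])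
  have hqsymm : ∀ z, q (-z) = q z := fun z =>
    (ENNReal.toReal_eq_toReal_iff' (measure_ne_top _ _) (measure_ne_top _ _)).1
      (by rw [hp, hp, hsymm])
  have hq1 : ∑' z, q z = 1 := tsum_measure_preimage_singleton_eq_one (hmeas 0)
  have hmom : ∑' n : ℕ, ((n : ℝ≥0∞) + 1) * excess q n ≠ ∞ :=
    ne_top_of_le_ne_top (tsum_mul_toNat_pow_three_ne_top (fun z => measure_ne_top _ _)
      (by simpa [q, hp] using hmom3)) tsum_succ_mul_excess_le
  have hv : ∀ x : ℕ, excess q x ≠ ∞ := fun x =>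
    ne_top_of_le_ne_top hmom ((le_mul_of_one_le_left' le_add_self).trans (ENNReal.le_tsum x))
  obtain ⟨c, hc, hcv⟩ := exists_weights (excess_antitone q) hmom
    fun x _ => excess_lt_excess_sub_one (hv x)
  have hG := tsum_mul_stoppedStep_add_overshootStep_le hqsymm hq1 fun x hx =>
    tsum_mul_rampSum_add_le hqsymm hq1
      (ENNReal.mul_ne_top (ne_top_of_le_ne_top hc (tsum_le_tsum_succ_mul c)) (hv x)) (hcv x hx)
  refine ⟨(∑' n : ℕ, ((n : ℝ≥0∞) + 1) * c n).toReal, fun k hk => ?_⟩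
  calc ∫ ω, ((overshoot ξ k ω : ℤ) : ℝ) ∂μ
      ≤ (∫⁻ ω, ENNReal.ofReal (overshoot ξ k ω) ∂μ).toReal :=
        integral_le_toReal_lintegral_ofReal fun ω => by exact_mod_cast overshoot_nonneg ξ k ω
    _ ≤ _ := ENNReal.toReal_mono hc
        ((lintegral_ofReal_overshoot_le hmeas hiid hq hG (by omega)).trans (rampSum_le c k))

/-- if the kernel has finite third absolute moment then the expected
overshoot below `0` is bounded uniformly in the starting point `k ≥ 1`. -/
theorem stmt11
    {Ω : Type*} [MeasurableSpace Ω] (μ : Measure Ω) [IsProbabilityMeasure μ]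
    (p : ℤ → ℝ) (hp0 : ∀ z, 0 ≤ p z) (hp1 : HasSum p 1)
    (hsymm : ∀ z, p (-z) = p z)
    (hirr : AddSubgroup.closure {z : ℤ | p z ≠ 0} = ⊤)
    (hmom : Summable fun z : ℤ => (z : ℝ) ^ 2 * p z)
    (ξ : ℕ → Ω → ℤ) (hmeas : ∀ i, Measurable (ξ i))
    (hiid : iIndepFun ξ μ)
    (hstep : ∀ i z, (μ {ω | ξ i ω = z}).toReal = p z)
    (hmom3 : Summable fun z : ℤ => |(z : ℝ)| ^ 3 * p z) :
    ∃ C : ℝ, ∀ k : ℕ, 1 ≤ k →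
      (∫ ω, ((overshoot ξ (k : ℤ) ω : ℤ) : ℝ) ∂μ) ≤ C :=
  stmt11_general μ p hsymm ξ hmeas hiid hstep hmom3
end

section
/- Let R be an integer-valued symmetric random variable with E[|R|^{2−ε}] = ∞ for some ε ∈ (0,1). Set V_j = 2^{2j} P(|R| ∈ [2^{j−1}, 2^j]). Then there exists a constant C' = C'(ε) and a subsequence k_i → ∞ along which Σ_{j=1}^{k_i − 1} V_j ≤ C' · V_{k_i}; equivalently, along the subsequence, (Σ_{j=1}^{k−1} 2^{2j} P(|R| ∈ [2^{j−1},2^j])) / (2^{2k} P(|R| ∈ [2^{k−1},2^k])) ≤ C'. -/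
open MeasureTheory Finset

lemma aux_integrable {Ω : Type*} [MeasurableSpace Ω] (μ : Measure Ω) [IsProbabilityMeasure μ]
    (R : Ω → ℤ) (hR : Measurable R) (ε M : ℝ) (hε0 : 0 < ε) (hε1 : ε < 1) (hM : 0 ≤ M)
    (hbd : ∀ k : ℕ, ((2:ℝ) ^ ((2:ℝ) - ε)) ^ k *
        (μ {ω | (2 : ℤ) ^ (k - 1) ≤ |R ω| ∧ |R ω| ≤ 2 ^ k}).toReal
        ≤ M * ((2:ℝ) ^ (-(ε/2) : ℝ)) ^ k) :
    Integrable (fun ω => |(R ω : ℝ)| ^ (2 - ε)) μ := by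
  set b : ℝ := (2:ℝ) ^ ((2:ℝ) - ε) with hbdef
  set r : ℝ := (2:ℝ) ^ (-(ε/2) : ℝ) with hrdef
  have hr0 : 0 < r := Real.rpow_pos_of_pos (by norm_num) _
  have hr1 : r < 1 := by
    rw [hrdef]
    apply Real.rpow_lt_one_of_one_lt_of_neg (by norm_num) (by linarith)
  set shell : ℕ → Set Ω := fun k => {ω | (2 : ℤ) ^ (k - 1) ≤ |R ω| ∧ |R ω| ≤ 2 ^ k} with hshell
  have hmeas : ∀ k, MeasurableSet (shell k) := by
    intro k
    exact hR (show MeasurableSet {z : ℤ | (2:ℤ)^(k-1) ≤ |z| ∧ |z| ≤ 2^k} from trivial)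
  have hf : Measurable fun ω => |(R ω : ℝ)| ^ (2 - ε) := by
    have h1 : Measurable fun ω => |(R ω : ℝ)| :=
      (measurable_from_top.comp hR : Measurable fun ω => ((R ω : ℝ))).abs
    exact h1.pow measurable_const
  refine ⟨hf.aestronglyMeasurable, ?_⟩
  rw [hasFiniteIntegral_iff_ofReal (ae_of_all _ fun ω => Real.rpow_nonneg (abs_nonneg _) _)]
  have hpt : ∀ ω, ENNReal.ofReal (|(R ω : ℝ)| ^ (2 - ε)) ≤
      1 + ∑' k, (shell k).indicator (fun _ => ENNReal.ofReal (b ^ k)) ω := by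
    intro ω
    by_cases h1 : |R ω| ≤ 1
    · have hle : |(R ω : ℝ)| ≤ 1 := by
        rw [← Int.cast_abs]; exact_mod_cast h1
      have : |(R ω : ℝ)| ^ (2 - ε) ≤ 1 :=
        Real.rpow_le_one (abs_nonneg _) hle (by linarith)
      calc ENNReal.ofReal (|(R ω : ℝ)| ^ (2 - ε)) ≤ ENNReal.ofReal 1 :=
            ENNReal.ofReal_le_ofReal this
        _ = 1 := ENNReal.ofReal_one
        _ ≤ _ := le_self_add
    · push_neg at h1
      set n : ℕ := (|R ω|).toNat with hn
      have hncast : (n : ℤ) = |R ω| := Int.toNat_of_nonneg (abs_nonneg _)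
      have hn2 : 2 ≤ n := by omega
      set k : ℕ := Nat.log 2 n + 1 with hk
      have hmem : ω ∈ shell k := by
        constructor
        · show (2:ℤ) ^ (k - 1) ≤ |R ω|
          have h := Nat.pow_log_le_self 2 (show n ≠ 0 by omega)
          have : k - 1 = Nat.log 2 n := by omega
          rw [this, ← hncast]
          exact_mod_cast h
        · show |R ω| ≤ (2:ℤ) ^ k
          have h := Nat.lt_pow_succ_log_self (show 1 < 2 by norm_num) n
          rw [← hncast]
          exact_mod_cast h.le
      have hle2 : |(R ω : ℝ)| ≤ (2:ℝ) ^ k := by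
        have h := Nat.lt_pow_succ_log_self (show 1 < 2 by norm_num) n
        have : (n : ℝ) ≤ (2:ℝ) ^ k := by exact_mod_cast h.le
        rw [← Int.cast_abs, ← hncast]
        exact_mod_cast this
      have hfb : |(R ω : ℝ)| ^ (2 - ε) ≤ b ^ k := by
        have h2 : |(R ω : ℝ)| ^ (2 - ε) ≤ ((2:ℝ) ^ k) ^ (2 - ε) :=
          Real.rpow_le_rpow (abs_nonneg _) hle2 (by linarith)
        have h3 : ((2:ℝ) ^ k) ^ ((2:ℝ) - ε) = b ^ k := by
          rw [hbdef, ← Real.rpow_natCast 2 k, ← Real.rpow_mul (by norm_num),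
            mul_comm, Real.rpow_mul (by norm_num), Real.rpow_natCast]
        linarith [h3 ▸ h2]
      calc ENNReal.ofReal (|(R ω : ℝ)| ^ (2 - ε)) ≤ ENNReal.ofReal (b ^ k) :=
            ENNReal.ofReal_le_ofReal hfb
        _ = (shell k).indicator (fun _ => ENNReal.ofReal (b ^ k)) ω := by
            rw [Set.indicator_of_mem hmem]
        _ ≤ ∑' k, (shell k).indicator (fun _ => ENNReal.ofReal (b ^ k)) ω :=
            ENNReal.le_tsum k
        _ ≤ _ := le_add_self
  calc ∫⁻ ω, ENNReal.ofReal (|(R ω : ℝ)| ^ (2 - ε)) ∂μ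
      ≤ ∫⁻ ω, (1 + ∑' k, (shell k).indicator (fun _ => ENNReal.ofReal (b ^ k)) ω) ∂μ :=
        lintegral_mono hpt
    _ = 1 + ∑' k, ENNReal.ofReal (b ^ k) * μ (shell k) := by
        rw [lintegral_add_left measurable_const, lintegral_const, one_mul, measure_univ]
        congr 1
        rw [lintegral_tsum (fun k => ((measurable_const.indicator (hmeas k))).aemeasurable)]
        congr 1
        ext k
        rw [lintegral_indicator (hmeas k), setLIntegral_const]
    _ ≤ 1 + ∑' k, ENNReal.ofReal (M * r ^ k) := by
        gcongr with k
        have hq : μ (shell k) = ENNReal.ofReal ((μ (shell k)).toReal) :=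
          (ENNReal.ofReal_toReal (measure_ne_top μ _)).symm
        rw [hq, ← ENNReal.ofReal_mul (by positivity)]
        exact ENNReal.ofReal_le_ofReal (hbd k)
    _ < ⊤ := by
        rw [ENNReal.ofReal_tsum_of_nonneg (fun k => by positivity)
          ((summable_geometric_of_lt_one hr0.le hr1).mul_left M) |>.symm]
        exact ENNReal.add_lt_top.2 ⟨ENNReal.one_lt_top, ENNReal.ofReal_lt_top⟩

/-- if `R` is an integer-valued symmetric random variable with
`E[|R|^{2−ε}] = ∞` for some `ε ∈ (0,1)`, and `V_j = 2^{2j} P(|R| ∈ [2^{j−1}, 2^j])`, then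
along a subsequence `k_i → ∞` one has `Σ_{j=1}^{k_i−1} V_j ≤ C' V_{k_i}`. -/
theorem stmt17 {Ω : Type*} [MeasurableSpace Ω] (μ : Measure Ω) [IsProbabilityMeasure μ]
    (R : Ω → ℤ) (hR : Measurable R)
    (hsymm : ∀ z : ℤ, μ {ω | R ω = z} = μ {ω | R ω = -z})
    (ε : ℝ) (hε0 : 0 < ε) (hε1 : ε < 1)
    (hinf : ¬ Integrable (fun ω => |(R ω : ℝ)| ^ (2 - ε)) μ) :
    ∃ C' : ℝ, 0 < C' ∧ ∀ K : ℕ, ∃ k : ℕ, K ≤ k ∧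
      (∑ j ∈ Finset.Icc 1 (k - 1),
        (2 : ℝ) ^ (2 * j) *
          (μ {ω | (2 : ℤ) ^ (j - 1) ≤ |R ω| ∧ |R ω| ≤ 2 ^ j}).toReal) ≤
      C' * ((2 : ℝ) ^ (2 * k) *
        (μ {ω | (2 : ℤ) ^ (k - 1) ≤ |R ω| ∧ |R ω| ≤ 2 ^ k}).toReal) := by
  classical
  let p : ℕ → ℝ := fun k => (μ {ω | (2 : ℤ) ^ (k - 1) ≤ |R ω| ∧ |R ω| ≤ 2 ^ k}).toReal
  let V : ℕ → ℝ := fun k => (2:ℝ) ^ (2 * k) * p k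
  have hpnn : ∀ k, 0 ≤ p k := fun k => ENNReal.toReal_nonneg
  have hVnn : ∀ k, 0 ≤ V k := fun k => mul_nonneg (by positivity) (hpnn k)
  set c : ℝ := (2:ℝ) ^ (ε/2 : ℝ) with hcdef
  set r : ℝ := (2:ℝ) ^ (-(ε/2) : ℝ) with hrdef
  have hc1 : 1 < c :=
    (Real.one_lt_rpow_iff_of_pos (by norm_num)).2 (Or.inl ⟨by norm_num, by positivity⟩)
  have hc0 : (0:ℝ) < c := zero_lt_one.trans hc1
  have hr0 : 0 < r := Real.rpow_pos_of_pos (by norm_num) _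
  have hcr : c * r = 1 := by
    rw [hcdef, hrdef, ← Real.rpow_add (by norm_num)]
    norm_num
  let a : ℕ → ℝ := fun k => V k / c ^ k
  have hann : ∀ k, 0 ≤ a k := fun k => div_nonneg (hVnn k) (by positivity)
  have haV : ∀ k, a k * c ^ k = V k := fun k => div_mul_cancel₀ _ (by positivity)
  have hub : ∀ M : ℝ, ∃ k, M < a k := by
    by_contra h
    push_neg at h
    obtain ⟨M, hM⟩ := h
    have hM0 : 0 ≤ M := le_trans (hann 0) (hM 0)
    apply hinf
    apply aux_integrable μ R hR ε M hε0 hε1 hM0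
    intro k
    have hb4 : (2:ℝ) ^ ((2:ℝ) - ε) = 4 * r ^ 2 := by
      rw [hrdef, ← Real.rpow_natCast ((2:ℝ) ^ (-(ε/2):ℝ)) 2, ← Real.rpow_mul (by norm_num),
        show (2:ℝ) - ε = 2 + (-(ε/2) * (2:ℕ)) by push_cast; ring,
        Real.rpow_add (by norm_num)]
      norm_num
    have hVk : V k ≤ M * c ^ k := by
      have := hM k
      rw [div_le_iff₀ (by positivity)] at this
      exact this
    have hcrk : (c * r) ^ k = 1 := by rw [hcr, one_pow]
    have h4k : ((4:ℝ)) ^ k = (2:ℝ) ^ (2 * k) := by rw [pow_mul]; norm_num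
    have hr2k : ((r:ℝ) ^ 2) ^ k = r ^ k * r ^ k := by
      rw [← pow_mul, two_mul, pow_add]
    calc ((2:ℝ) ^ ((2:ℝ) - ε)) ^ k * p k = (((2:ℝ)^(2*k)) * p k) * (r ^ k * r ^ k) := by
          rw [hb4, mul_pow, h4k, hr2k]; ring
      _ ≤ (M * c ^ k) * (r ^ k * r ^ k) := by
          apply mul_le_mul_of_nonneg_right hVk (by positivity)
      _ = M * r ^ k * (c * r) ^ k := by rw [mul_pow]; ring
      _ = M * r ^ k := by rw [hcrk, mul_one]
  refine ⟨1 / (c - 1), div_pos one_pos (by linarith), ?_⟩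
  intro K
  obtain ⟨B, hB⟩ : ∃ B, ∀ j ≤ K, a j ≤ B :=
    ⟨(Finset.range (K+1)).sup' ⟨0, by simp⟩ a, fun j hj =>
      Finset.le_sup' a (Finset.mem_range.2 (Nat.lt_succ_of_le hj))⟩
  have hex : ∃ k, B < a k := hub B
  refine ⟨Nat.find hex, ?_, ?_⟩
  · by_contra h
    push_neg at h
    exact absurd (hB _ (le_of_lt h)) (not_le.2 (Nat.find_spec hex))
  · set k := Nat.find hex with hkdef
    have hrec : ∀ j < k, a j ≤ a k :=
      fun j hj => (le_of_not_gt (Nat.find_min hex hj)).trans (Nat.find_spec hex).le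
    have step1 : (∑ j ∈ Finset.Icc 1 (k - 1), V j) ≤ ∑ j ∈ Finset.range k, V j := by
      apply Finset.sum_le_sum_of_subset_of_nonneg
      · intro j hj
        simp only [Finset.mem_Icc] at hj
        simp only [Finset.mem_range]
        omega
      · intro j _ _
        exact hVnn j
    have step2 : (∑ j ∈ Finset.range k, V j) ≤ a k * ((c ^ k - 1) / (c - 1)) := by
      rw [← geom_sum_eq (ne_of_gt hc1), Finset.mul_sum]
      apply Finset.sum_le_sum
      intro j hj
      rw [← haV j]
      exact mul_le_mul_of_nonneg_right (hrec j (Finset.mem_range.1 hj)) (by positivity)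
    have step3 : a k * ((c ^ k - 1) / (c - 1)) ≤ 1 / (c - 1) * V k := by
      rw [← haV k]
      have h1 : (c ^ k - 1) / (c - 1) ≤ c ^ k / (c - 1) := by
        gcongr
        · linarith
      calc a k * ((c ^ k - 1) / (c - 1)) ≤ a k * (c ^ k / (c - 1)) :=
            mul_le_mul_of_nonneg_left h1 (hann k)
        _ = 1 / (c - 1) * (a k * c ^ k) := by ring
    exact le_trans step1 (le_trans step2 step3)
end
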